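/- arXiv:2412.00438 — 5 statements merged into one kernel-verified Lean document; each statement's English description precedes it below -/
import Mathlib

section
/- Let G be a locally compact Hausdorff group with left Haar measure ν, let φ ∈ Prob(G,ν), and set B = { _φf : f ∈ L^∞(G,ν), ‖f‖_{ν,∞} ≤ 1 }, where (_φf)(g) = ∫_G f(gx)φ(x) dν(x) (so B is an LUEB set). Then the map Δ(G) → Prob(G,ν), μ ↦ μφ := ∑_{g∈spt(μ)} μ(g)·(φ∘λ_{g⁻¹}), is G-left-equivariant, and for all μ, μ' ∈ Δ(G) one has ‖μφ − μ'φ‖_{ν,1} = p_B(μ − μ') = sup_{f∈L^∞(G,ν), ‖f‖_{ν,∞}≤1} |⟨μ − μ', _φf⟩|. -/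
open Filter Topology MeasureTheory UniformConvergence

/-- `Δ(G)`: finitely supported probability densities on `G`. -/
def IsDelta {G : Type*} (μ : G → ℝ) : Prop :=
  (Function.support μ).Finite ∧ (∀ x, 0 ≤ μ x) ∧ ∑ᶠ x, μ x = 1

/-- The pairing `⟨μ, f⟩ = ∑ₓ μ(x) · f(x)`. -/
noncomputable def dpair {G : Type*} (μ f : G → ℝ) : ℝ := ∑ᶠ x, μ x * f x

/-- Left-translation action on densities: `(g · μ)(x) = μ(g⁻¹x)`. -/
def actD {G : Type*} [Group G] (g : G) (μ : G → ℝ) : G → ℝ := fun x => μ (g⁻¹ * x)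

/-- Action on functionals: `(g · ξ)(f) = ξ(f ∘ λ_g)`. -/
def actF {G : Type*} [Group G] (g : G) (ξ : (G → ℝ) → ℝ) : (G → ℝ) → ℝ :=
  fun f => ξ fun x => f (g * x)

/-- The functional `f ↦ ⟨μ, f⟩` associated with a density `μ`. -/
noncomputable def toFunc {G : Type*} (μ : G → ℝ) : (G → ℝ) → ℝ := fun f => dpair μ f

/-- Bounded right-uniformly continuous functions. -/
def IsRUCB {G : Type*} [Group G] [TopologicalSpace G] (f : G → ℝ) : Prop :=
  (∃ C : ℝ, ∀ x, |f x| ≤ C) ∧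
  ∀ ε > (0 : ℝ), ∃ U ∈ nhds (1 : G), ∀ u ∈ U, ∀ x : G, |f x - f (u * x)| ≤ ε

/-- RUEB sets: sup-norm bounded, right-uniformly equicontinuous. -/
def IsRUEB {G : Type*} [Group G] [TopologicalSpace G] (B : Set (G → ℝ)) : Prop :=
  (∃ C : ℝ, ∀ f ∈ B, ∀ x : G, |f x| ≤ C) ∧
  ∀ ε > (0 : ℝ), ∃ U ∈ nhds (1 : G), ∀ u ∈ U, ∀ f ∈ B, ∀ x : G, |f x - f (u * x)| ≤ ε

/-- Bounded left-uniformly continuous functions. -/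
def IsLUCB {G : Type*} [Group G] [TopologicalSpace G] (f : G → ℝ) : Prop :=
  (∃ C : ℝ, ∀ x, |f x| ≤ C) ∧
  ∀ ε > (0 : ℝ), ∃ U ∈ nhds (1 : G), ∀ u ∈ U, ∀ x : G, |f x - f (x * u)| ≤ ε

/-- LUEB sets: sup-norm bounded, left-uniformly equicontinuous. -/
def IsLUEB {G : Type*} [Group G] [TopologicalSpace G] (B : Set (G → ℝ)) : Prop :=
  (∃ C : ℝ, ∀ f ∈ B, ∀ x : G, |f x| ≤ C) ∧
  ∀ ε > (0 : ℝ), ∃ U ∈ nhds (1 : G), ∀ u ∈ U, ∀ f ∈ B, ∀ x : G, |f x - f (x * u)| ≤ ε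

/-- The UEB uniformity (uniform convergence on RUEB sets) on the space of
functionals on functions on `G`. -/
noncomputable def uebUniformityR (G : Type*) [Group G] [TopologicalSpace G] :
    UniformSpace ((G → ℝ) → ℝ) :=
  ⨅ (B : Set (G → ℝ)) (_ : IsRUEB B),
    UniformSpace.comap (fun ξ => UniformFun.ofFun fun f : B => ξ (f : G → ℝ))
      (UniformFun.uniformSpace (↥B) ℝ)

/-- The UEB topology associated with the right uniformity. -/
noncomputable def uebTopR (G : Type*) [Group G] [TopologicalSpace G] :
    TopologicalSpace ((G → ℝ) → ℝ) := (uebUniformityR G).toTopologicalSpace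

/-- `Mean_u(G_r)`: the UEB-closure of `Δ(G)` inside the functionals. -/
noncomputable def MeanUR (G : Type*) [Group G] [TopologicalSpace G] :
    Set ((G → ℝ) → ℝ) :=
  @closure _ (uebTopR G) (toFunc '' {μ : G → ℝ | IsDelta μ})

/-- The UEB uniformity (uniform convergence on LUEB sets). -/
noncomputable def uebUniformityL (G : Type*) [Group G] [TopologicalSpace G] :
    UniformSpace ((G → ℝ) → ℝ) :=
  ⨅ (B : Set (G → ℝ)) (_ : IsLUEB B),
    UniformSpace.comap (fun ξ => UniformFun.ofFun fun f : B => ξ (f : G → ℝ))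
      (UniformFun.uniformSpace (↥B) ℝ)

/-- The UEB topology associated with the left uniformity. -/
noncomputable def uebTopL (G : Type*) [Group G] [TopologicalSpace G] :
    TopologicalSpace ((G → ℝ) → ℝ) := (uebUniformityL G).toTopologicalSpace

/-- `Mean_u(G_ℓ)`: the UEB-closure of `Δ(G)`. -/
noncomputable def MeanUL (G : Type*) [Group G] [TopologicalSpace G] :
    Set ((G → ℝ) → ℝ) :=
  @closure _ (uebTopL G) (toFunc '' {μ : G → ℝ | IsDelta μ})

/-- Amenability of an action of a topological group on a topological space. -/
def AmenableAction {G : Type*} [Group G] [TopologicalSpace G]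
    {X : Type*} [TopologicalSpace X] (act : G → X → X) : Prop :=
  ∃ (ι : Type) (pι : Preorder ι) (_ : Nonempty ι)
    (_ : IsDirected ι fun a b => pι.le a b)
    (μ : ι → X → (G → ℝ) → ℝ),
    (∀ i x, μ i x ∈ MeanUR G) ∧
    (∀ i, @Continuous X ((G → ℝ) → ℝ) inferInstance (uebTopR G) (μ i)) ∧
    ∀ (g : G) (B : Set (G → ℝ)), IsRUEB B → ∀ ε > (0 : ℝ),
      ∃ i₀, ∀ i, pι.le i₀ i → ∀ x, ∀ f ∈ B,
        |actF g (μ i x) f - μ i (act g x) f| ≤ ε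

/-- Skew-amenability of an action. -/
def SkewAmenableAction {G : Type*} [Group G] [TopologicalSpace G]
    {X : Type*} [TopologicalSpace X] (act : G → X → X) : Prop :=
  ∃ (ι : Type) (pι : Preorder ι) (_ : Nonempty ι)
    (_ : IsDirected ι fun a b => pι.le a b)
    (μ : ι → X → (G → ℝ) → ℝ),
    (∀ i x, μ i x ∈ MeanUL G) ∧
    (∀ i, @Continuous X ((G → ℝ) → ℝ) inferInstance (uebTopL G) (μ i)) ∧
    ∀ (g : G) (B : Set (G → ℝ)), IsLUEB B → ∀ ε > (0 : ℝ),
      ∃ i₀, ∀ i, pι.le i₀ i → ∀ x, ∀ f ∈ B,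
        |actF g (μ i x) f - μ i (act g x) f| ≤ ε

/-- AD-amenability (Anantharaman-Delaroche) of an action of a locally compact
group, with respect to a left Haar measure `ν`. -/
def ADAmenableAction {G : Type*} [Group G] [TopologicalSpace G] [MeasurableSpace G]
    (ν : Measure G) {X : Type*} [TopologicalSpace X] (act : G → X → X) : Prop :=
  ∃ (ι : Type) (pι : Preorder ι) (_ : Nonempty ι)
    (_ : IsDirected ι fun a b => pι.le a b)
    (μ : ι → X → G → ℝ),
    (∀ i x, Integrable (μ i x) ν ∧ (∀ᵐ t ∂ν, 0 ≤ μ i x t) ∧ ∫ t, μ i x t ∂ν = 1) ∧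
    (∀ i (h : G → ℝ), Continuous h → Tendsto h (cocompact G) (nhds 0) →
      Continuous fun x => ∫ t, h t * μ i x t ∂ν) ∧
    ∀ K : Set G, IsCompact K → ∀ ε > (0 : ℝ),
      ∃ i₀, ∀ i, pι.le i₀ i → ∀ g ∈ K, ∀ x,
        ∫ t, |μ i x (g⁻¹ * t) - μ i (act g x) t| ∂ν ≤ ε

/-- Amenability of a topological group: a left-invariant mean on `RUCB(G)`. -/
def AmenableGroup (G : Type*) [Group G] [TopologicalSpace G] : Prop :=
  ∃ m : (G → ℝ) → ℝ,
    (∀ f h : G → ℝ, IsRUCB f → IsRUCB h → m (f + h) = m f + m h) ∧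
    (∀ (c : ℝ) (f : G → ℝ), IsRUCB f → m (c • f) = c * m f) ∧
    (∀ f : G → ℝ, IsRUCB f → (∀ x, 0 ≤ f x) → 0 ≤ m f) ∧
    m (fun _ => 1) = 1 ∧
    ∀ (g : G) (f : G → ℝ), IsRUCB f → m (fun x => f (g * x)) = m f

/-- Well-placed subgroups: there is an `H`-left-equivariant, right-uniformly
continuous map `G → Mean_u(H_r)` (uniform continuity spelled out via the basic
entourages of the right uniformity of `G` and the UEB pseudometrics). -/
def WellPlaced {G : Type*} [Group G] [TopologicalSpace G] (H : Subgroup G) : Prop :=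
  ∃ φ : G → ((↥H → ℝ) → ℝ),
    (∀ g, φ g ∈ MeanUR ↥H) ∧
    (∀ (h : ↥H) (g : G), φ ((h : G) * g) = actF h (φ g)) ∧
    ∀ B : Set (↥H → ℝ), IsRUEB B → ∀ ε > (0 : ℝ), ∃ U ∈ nhds (1 : G),
      ∀ x y : G, x * y⁻¹ ∈ U → ∀ f ∈ B, |φ x f - φ y f| ≤ ε

/-! Left invariance of `ν` makes every translate `φ ∘ λ_{g⁻¹}` a probability density, so the
finite convex combination `μφ` is one too, and reindexing the sum by `h ↦ g⁻¹h` gives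
equivariance. The substitution `x ↦ g⁻¹x` turns `⟨μ - μ', ₚf⟩` into `∫ f · (μφ - μ'φ) dν`,
and the supremum of `|∫ f ψ|` over the unit ball of `L^∞` is `‖ψ‖₁`, attained at the sign
of `ψ`. -/

open Function

section Convolution

variable {G : Type*} [Group G]

/-- The paper's `μφ`. -/
noncomputable def deltaConv (μ φ : G → ℝ) (x : G) : ℝ := ∑ᶠ g, μ g * φ (g⁻¹ * x)

theorem deltaConv_eq_sum {μ : G → ℝ} {S : Finset G} (hS : support μ ⊆ S) (φ : G → ℝ) (x : G) :
    deltaConv μ φ x = ∑ g ∈ S, μ g * φ (g⁻¹ * x) :=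
  finsum_eq_finsetSum_of_support_subset _ fun _ hg => hS (left_ne_zero_of_mul hg)

theorem deltaConv_actD (g : G) (μ φ : G → ℝ) :
    deltaConv (actD g μ) φ = fun x => deltaConv μ φ (g⁻¹ * x) := by
  funext x
  rw [deltaConv, ← finsum_comp_equiv (Equiv.mulLeft g)]
  simp [actD, deltaConv, mul_assoc]

theorem deltaConv_sub {μ μ' : G → ℝ} (hμ : (support μ).Finite) (hμ' : (support μ').Finite)
    (φ : G → ℝ) (x : G) :
    deltaConv μ φ x - deltaConv μ' φ x = deltaConv (μ - μ') φ x := by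
  rw [deltaConv, deltaConv, ← finsum_sub_distrib (hμ.subset (support_mul_subset_left _ _))
    (hμ'.subset (support_mul_subset_left _ _))]
  exact finsum_congr fun g => (sub_mul _ _ _).symm

variable [MeasurableSpace G] [MeasurableMul G] {ν : Measure G} [ν.IsMulLeftInvariant]
  {μ φ : G → ℝ}

theorem integrable_deltaConv (hμ : (support μ).Finite) (hφ : Integrable φ ν) :
    Integrable (deltaConv μ φ) ν := by
  rw [funext (deltaConv_eq_sum hμ.coe_toFinset.ge φ)]
  exact integrable_finsetSum _ fun g _ => (hφ.comp_mul_left g⁻¹).const_mul (μ g)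

theorem deltaConv_nonneg_ae (hμ : (support μ).Finite) (hμ₀ : ∀ g, 0 ≤ μ g)
    (hφ : ∀ᵐ x ∂ν, 0 ≤ φ x) : ∀ᵐ x ∂ν, 0 ≤ deltaConv μ φ x := by
  have htranslate : ∀ g, ∀ᵐ x ∂ν, 0 ≤ φ (g⁻¹ * x) := fun g =>
    (measurePreserving_mul_left ν g⁻¹).quasiMeasurePreserving.ae hφ
  filter_upwards [(ae_ball_iff hμ.toFinset.countable_toSet).2 fun g _ => htranslate g] with x hx
  rw [deltaConv_eq_sum hμ.coe_toFinset.ge]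
  exact Finset.sum_nonneg fun g hg => mul_nonneg (hμ₀ g) (hx g hg)

theorem integral_deltaConv (hμ : (support μ).Finite) (hφ : Integrable φ ν) :
    ∫ x, deltaConv μ φ x ∂ν = (∑ᶠ g, μ g) * ∫ x, φ x ∂ν := by
  rw [funext (deltaConv_eq_sum hμ.coe_toFinset.ge φ),
    integral_finsetSum _ fun g _ => (hφ.comp_mul_left g⁻¹).const_mul (μ g),
    finsum_eq_finsetSum_of_support_subset _ hμ.coe_toFinset.ge, Finset.sum_mul]
  refine Finset.sum_congr rfl fun g _ => ?_
  rw [integral_const_mul, integral_mul_left_eq_self φ g⁻¹]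

theorem dpair_integral_translate_mul (hμ : (support μ).Finite) (hφ : Integrable φ ν)
    {f : G → ℝ} (hf : AEStronglyMeasurable f ν) {C : ℝ} (hfC : ∀ᵐ x ∂ν, ‖f x‖ ≤ C) :
    dpair μ (fun g => ∫ x, f (g * x) * φ x ∂ν) = ∫ y, f y * deltaConv μ φ y ∂ν := by
  have hS := hμ.coe_toFinset.ge
  have htranslate : ∀ g, ∫ x, f (g * x) * φ x ∂ν = ∫ y, f y * φ (g⁻¹ * y) ∂ν := fun g => by
    simpa using integral_mul_left_eq_self (μ := ν) (fun y => f y * φ (g⁻¹ * y)) g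
  rw [dpair, finsum_eq_finsetSum_of_support_subset _ fun _ hg => hS (left_ne_zero_of_mul hg),
    funext (deltaConv_eq_sum hS φ)]
  simp_rw [Finset.mul_sum, htranslate, ← integral_const_mul]
  rw [← integral_finsetSum _ fun g _ => ((hφ.comp_mul_left g⁻¹).bdd_mul hf hfC).const_mul (μ g)]
  exact integral_congr_ae (Eventually.of_forall fun y => Finset.sum_congr rfl fun g _ => by ring)

end Convolution

section L1Duality

variable {α : Type*} [MeasurableSpace α] {ν : Measure α} {ψ : α → ℝ}

theorem abs_integral_mul_le_integral_abs (hψ : Integrable ψ ν) {f : α → ℝ}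
    (hf : ∀ᵐ x ∂ν, |f x| ≤ 1) : |∫ x, f x * ψ x ∂ν| ≤ ∫ x, |ψ x| ∂ν := by
  refine abs_integral_le_integral_abs.trans
    (integral_mono_of_nonneg (Eventually.of_forall fun _ => abs_nonneg _) hψ.abs ?_)
  filter_upwards [hf] with x hx
  rw [abs_mul]
  exact mul_le_of_le_one_left (abs_nonneg _) hx

theorem ite_nonneg_one_neg_one_mul_eq_abs (t : ℝ) : (if 0 ≤ t then 1 else -1) * t = |t| := by
  split_ifs with ht
  · rw [one_mul, abs_of_nonneg ht]
  · rw [neg_one_mul, abs_of_neg (not_le.1 ht)]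

theorem isGreatest_abs_integral_mul (hψ : Integrable ψ ν) :
    IsGreatest {r : ℝ | ∃ f : α → ℝ, AEStronglyMeasurable f ν ∧ (∀ᵐ x ∂ν, |f x| ≤ 1) ∧
      r = |∫ x, f x * ψ x ∂ν|} (∫ x, |ψ x| ∂ν) := by
  refine ⟨⟨fun x => if 0 ≤ ψ x then 1 else -1, ?_, ?_, ?_⟩, ?_⟩
  · exact ((measurable_const.ite measurableSet_Ici measurable_const).comp_aemeasurable
      hψ.aemeasurable).aestronglyMeasurable
  · exact Eventually.of_forall fun x => by dsimp only; split_ifs <;> norm_num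
  · simp_rw [ite_nonneg_one_neg_one_mul_eq_abs]
    exact (abs_of_nonneg (integral_nonneg fun _ => abs_nonneg _)).symm
  · rintro r ⟨f, -, hf, rfl⟩
    exact abs_integral_mul_le_integral_abs hψ hf

end L1Duality

theorem delta_convolution_isometry_general {G : Type*} [Group G] [TopologicalSpace G]
    [IsTopologicalGroup G] [MeasurableSpace G] [BorelSpace G]
    (ν : Measure G) [ν.IsHaarMeasure] (φ : G → ℝ) (hφint : Integrable φ ν)
    (hφpos : ∀ᵐ x ∂ν, 0 ≤ φ x) (hφone : ∫ x, φ x ∂ν = 1) :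
    (∀ μ : G → ℝ, IsDelta μ →
      Integrable (fun x => ∑ᶠ g, μ g * φ (g⁻¹ * x)) ν ∧
      (∀ᵐ x ∂ν, 0 ≤ ∑ᶠ g, μ g * φ (g⁻¹ * x)) ∧
      ∫ x, (∑ᶠ g, μ g * φ (g⁻¹ * x)) ∂ν = 1) ∧
    (∀ (g : G) (μ : G → ℝ), IsDelta μ →
      (fun x => ∑ᶠ h, actD g μ h * φ (h⁻¹ * x)) =
        fun x => ∑ᶠ h, μ h * φ (h⁻¹ * (g⁻¹ * x))) ∧
    ∀ μ μ' : G → ℝ, IsDelta μ → IsDelta μ' →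
      ∫ x, |(∑ᶠ g, μ g * φ (g⁻¹ * x)) - ∑ᶠ g, μ' g * φ (g⁻¹ * x)| ∂ν =
      sSup {r : ℝ | ∃ f : G → ℝ, AEStronglyMeasurable f ν ∧
        (∀ᵐ x ∂ν, |f x| ≤ 1) ∧
        r = |dpair (fun g => μ g - μ' g) (fun g => ∫ x, f (g * x) * φ x ∂ν)|} := by
  refine ⟨fun μ ⟨hfin, hpos, hsum⟩ => ⟨integrable_deltaConv hfin hφint,
    deltaConv_nonneg_ae hfin hpos hφpos, ?_⟩, fun g μ _ => deltaConv_actD g μ φ, ?_⟩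
  · change ∫ x, deltaConv μ φ x ∂ν = 1
    rw [integral_deltaConv hfin hφint, hsum, hφone, one_mul]
  rintro μ μ' ⟨hfin, -, -⟩ ⟨hfin', -, -⟩
  have hdiff : (support (μ - μ')).Finite := (hfin.union hfin').subset (support_sub μ μ')
  have hpair : ∀ f : G → ℝ, AEStronglyMeasurable f ν → (∀ᵐ x ∂ν, |f x| ≤ 1) →
      dpair (μ - μ') (fun g => ∫ x, f (g * x) * φ x ∂ν) =
        ∫ y, f y * deltaConv (μ - μ') φ y ∂ν := fun f hf hf1 =>
    dpair_integral_translate_mul hdiff hφint hf (C := 1) hf1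
  calc ∫ x, |deltaConv μ φ x - deltaConv μ' φ x| ∂ν
      = ∫ x, |deltaConv (μ - μ') φ x| ∂ν := by simp_rw [deltaConv_sub hfin hfin']
    _ = _ := (isGreatest_abs_integral_mul (integrable_deltaConv hdiff hφint)).csSup_eq.symm
    _ = _ := congrArg sSup <| Set.ext fun r => exists_congr fun f =>
        and_congr_right fun hf => and_congr_right fun hf1 => by rw [← hpair f hf hf1]; rfl

/-- Proposition 4.6: for `φ ∈ Prob(G,ν)`, the map `μ ↦ μφ` from `Δ(G)` to `Prob(G,ν)`
is `G`-left-equivariant and `‖μφ - μ'φ‖₁ = p_B(μ - μ')` for the LUEB set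
`B = {ₚf : ‖f‖_∞ ≤ 1}`. -/
theorem delta_convolution_isometry {G : Type*} [Group G] [TopologicalSpace G]
    [IsTopologicalGroup G] [LocallyCompactSpace G] [T2Space G]
    [MeasurableSpace G] [BorelSpace G]
    (ν : Measure G) [ν.IsHaarMeasure] (φ : G → ℝ) (hφint : Integrable φ ν)
    (hφpos : ∀ᵐ x ∂ν, 0 ≤ φ x) (hφone : ∫ x, φ x ∂ν = 1) :
    (∀ μ : G → ℝ, IsDelta μ →
      Integrable (fun x => ∑ᶠ g, μ g * φ (g⁻¹ * x)) ν ∧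
      (∀ᵐ x ∂ν, 0 ≤ ∑ᶠ g, μ g * φ (g⁻¹ * x)) ∧
      ∫ x, (∑ᶠ g, μ g * φ (g⁻¹ * x)) ∂ν = 1) ∧
    (∀ (g : G) (μ : G → ℝ), IsDelta μ →
      (fun x => ∑ᶠ h, actD g μ h * φ (h⁻¹ * x)) =
        fun x => ∑ᶠ h, μ h * φ (h⁻¹ * (g⁻¹ * x))) ∧
    ∀ μ μ' : G → ℝ, IsDelta μ → IsDelta μ' →
      ∫ x, |(∑ᶠ g, μ g * φ (g⁻¹ * x)) - ∑ᶠ g, μ' g * φ (g⁻¹ * x)| ∂ν =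
      sSup {r : ℝ | ∃ f : G → ℝ, AEStronglyMeasurable f ν ∧
        (∀ᵐ x ∂ν, |f x| ≤ 1) ∧
        r = |dpair (fun g => μ g - μ' g) (fun g => ∫ x, f (g * x) * φ x ∂ν)|} :=
  delta_convolution_isometry_general ν φ hφint hφpos hφone
end

section
/- Every skew-amenable continuous action of a locally compact Hausdorff group on a compact Hausdorff space is amenable. -/
/-!
Fix a continuous, compactly supported probability density `θ` for a left Haar measure and put
`T f (x) = ∫ f (x t) θ(t) dt`. Since left translation is continuous in `L¹`, `T` turns
right-uniformly equicontinuous families into left-uniformly equicontinuous ones, and it commutes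
with left translations. So `ξ ↦ ξ ∘ T` is UEB-continuous and `G`-equivariant; it sends a finitely
supported mean to a compactly supported probability measure, which is a UEB-limit of finitely
supported means, and hence maps `Mean_u(G_ℓ)` into `Mean_u(G_r)`. Composing a net witnessing
skew-amenability with this map gives a net witnessing amenability.
-/

open Filter Topology MeasureTheory UniformConvergence

open Set Function Pointwise

section UEBTopology

theorem comap_ofFun_nhds_hasBasis {α : Type*} (B : Set α) (ξ : α → ℝ) :
    (comap (fun η : α → ℝ => UniformFun.ofFun fun f : B => η f)
      (𝓝 (UniformFun.ofFun fun f : B => ξ f))).HasBasis (fun ε : ℝ => 0 < ε)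
      fun ε => {η | ∀ f ∈ B, |η f - ξ f| < ε} := by
  refine ((UniformFun.hasBasis_nhds_of_basis B ℝ _ Metric.uniformity_basis_dist).comap
    _).to_hasBasis (fun ε hε => ⟨ε, hε, fun η hη f => ?_⟩)
    (fun ε hε => ⟨ε, hε, fun η hη f hf => ?_⟩)
  · simpa [Real.dist_eq, abs_sub_comm] using hη f f.2
  · simpa [Real.dist_eq, abs_sub_comm] using hη ⟨f, hf⟩

variable {G : Type*} [Group G] [TopologicalSpace G]

theorem isRUEB_empty : IsRUEB (∅ : Set (G → ℝ)) :=
  ⟨⟨0, by simp⟩, fun _ _ => ⟨univ, univ_mem, by simp⟩⟩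

theorem IsRUEB.union {B₁ B₂ : Set (G → ℝ)} (h₁ : IsRUEB B₁) (h₂ : IsRUEB B₂) :
    IsRUEB (B₁ ∪ B₂) := by
  obtain ⟨⟨C₁, hC₁⟩, hU₁⟩ := h₁
  obtain ⟨⟨C₂, hC₂⟩, hU₂⟩ := h₂
  refine ⟨⟨max C₁ C₂, ?_⟩, fun ε hε => ?_⟩
  · rintro f (hf | hf) x
    exacts [(hC₁ f hf x).trans (le_max_left _ _), (hC₂ f hf x).trans (le_max_right _ _)]
  · obtain ⟨U₁, hU₁n, hU₁⟩ := hU₁ ε hε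
    obtain ⟨U₂, hU₂n, hU₂⟩ := hU₂ ε hε
    exact ⟨U₁ ∩ U₂, inter_mem hU₁n hU₂n, fun u hu f hf =>
      hf.elim (hU₁ u hu.1 f) (hU₂ u hu.2 f)⟩

theorem nhds_uebTopR_hasBasis (ξ : (G → ℝ) → ℝ) :
    (@nhds _ (uebTopR G) ξ).HasBasis
      (fun p : {B : Set (G → ℝ) // IsRUEB B} × ℝ => 0 < p.2)
      fun p => {η | ∀ f ∈ p.1.1, |η f - ξ f| < p.2} := by
  have hnhds : @nhds _ (uebTopR G) ξ = ⨅ B : {B : Set (G → ℝ) // IsRUEB B},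
      comap (fun η : (G → ℝ) → ℝ => UniformFun.ofFun fun f : B.1 => η f)
        (𝓝 (UniformFun.ofFun fun f : B.1 => ξ f)) := by
    rw [uebTopR, uebUniformityR, iInf_subtype']
    simp +instances only [UniformSpace.toTopologicalSpace_iInf, nhds_iInf,
      UniformSpace.toTopologicalSpace_comap, nhds_induced]
  have : Nonempty {B : Set (G → ℝ) // IsRUEB B} := ⟨⟨∅, isRUEB_empty⟩⟩
  rw [hnhds]
  refine hasBasis_iInf_of_directed _ _
    (fun B : {B : Set (G → ℝ) // IsRUEB B} => comap_ofFun_nhds_hasBasis B.1 ξ) ?_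
  rintro ⟨B₁, hB₁⟩ ⟨B₂, hB₂⟩
  refine ⟨⟨B₁ ∪ B₂, hB₁.union hB₂⟩, ?_, ?_⟩ <;>
  refine ((comap_ofFun_nhds_hasBasis _ ξ).le_basis_iff (comap_ofFun_nhds_hasBasis _ ξ)).mpr
    fun ε hε => ⟨ε, hε, fun η hη f hf => hη f ?_⟩
  exacts [Or.inl hf, Or.inr hf]

theorem mem_MeanUR_of_forall_exists_isDelta {ξ : (G → ℝ) → ℝ}
    (h : ∀ B : Set (G → ℝ), IsRUEB B → ∀ ε > (0 : ℝ),
      ∃ μ : G → ℝ, IsDelta μ ∧ ∀ f ∈ B, |ξ f - dpair μ f| ≤ ε) :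
    ξ ∈ MeanUR G := by
  rw [MeanUR, @mem_closure_iff_nhds_basis _ (uebTopR G) _ _ _ _ _ (nhds_uebTopR_hasBasis ξ)]
  rintro ⟨⟨B, hB⟩, ε⟩ (hε : 0 < ε)
  obtain ⟨μ, hμ, hμξ⟩ := h B hB (ε / 2) (half_pos hε)
  refine ⟨toFunc μ, ⟨μ, hμ, rfl⟩, fun f hf => ?_⟩
  rw [abs_sub_comm]
  exact (hμξ f hf).trans_lt (half_lt_self hε)

theorem continuous_precomp_uebTop {T : (G → ℝ) → (G → ℝ)}
    (hT : ∀ B : Set (G → ℝ), IsRUEB B → IsLUEB (T '' B)) :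
    @Continuous _ _ (uebTopL G) (uebTopR G) fun ξ f => ξ (T f) := by
  refine @UniformContinuous.continuous _ _ (uebUniformityL G) (uebUniformityR G) _ ?_
  rw [uebUniformityR]
  refine uniformContinuous_iInf_rng.mpr fun B => uniformContinuous_iInf_rng.mpr fun hB =>
    uniformContinuous_comap' (u := uebUniformityL G) ?_
  have hrestrict : @UniformContinuous _ _ (uebUniformityL G) _
      fun ξ : (G → ℝ) → ℝ => UniformFun.ofFun fun f : T '' B => ξ f := by
    rw [uebUniformityL]
    exact uniformContinuous_iInf_dom (uniformContinuous_iInf_dom (i := hT B hB)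
      uniformContinuous_comap)
  have hprecomp := UniformFun.precomp_uniformContinuous (β := ℝ)
    (f := fun f : B => (⟨T f, mem_image_of_mem T f.2⟩ : T '' B))
  exact (@UniformContinuous.comp _ _ _ (uebUniformityL G) _ _ _ _ hprecomp hrestrict :)

theorem Continuous.precomp_uebTop {X : Type*} [TopologicalSpace X] {T : (G → ℝ) → (G → ℝ)}
    (hT : ∀ B : Set (G → ℝ), IsRUEB B → IsLUEB (T '' B)) {φ : X → (G → ℝ) → ℝ}
    (hφ : @Continuous _ _ _ (uebTopL G) φ) :
    @Continuous _ _ _ (uebTopR G) fun x f => φ x (T f) :=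
  (@Continuous.comp _ _ _ _ (uebTopL G) (uebTopR G) _ _ (continuous_precomp_uebTop hT) hφ :)

theorem precomp_mem_MeanUR {T : (G → ℝ) → (G → ℝ)}
    (hT : ∀ B : Set (G → ℝ), IsRUEB B → IsLUEB (T '' B))
    (hΔ : ∀ μ : G → ℝ, IsDelta μ → (fun f => dpair μ (T f)) ∈ MeanUR G)
    {ξ : (G → ℝ) → ℝ} (hξ : ξ ∈ MeanUL G) : (fun f => ξ (T f)) ∈ MeanUR G := by
  refine @MapsTo.closure_left _ _ (uebTopL G) (uebTopR G) _ _ _ ?_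
    (continuous_precomp_uebTop hT) (@isClosed_closure _ (uebTopR G) _) ξ hξ
  rintro _ ⟨μ, hμ, rfl⟩
  exact hΔ μ hμ

end UEBTopology

section FinitelySupportedDensities

variable {G : Type*}

theorem isDelta_indicator_singleton (x : G) : IsDelta (({x} : Set G).indicator 1) := by
  refine ⟨(finite_singleton x).subset (support_indicator_subset),
    fun y => indicator_nonneg (fun _ _ => zero_le_one) y, ?_⟩
  rw [finsum_eq_single _ x fun y hy => indicator_of_notMem (mem_singleton_iff.not.mpr hy) _]
  simp

theorem dpair_indicator_singleton (x : G) (f : G → ℝ) :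
    dpair (({x} : Set G).indicator 1) f = f x := by
  rw [dpair, finsum_eq_single _ x fun y hy => by simp [hy]]
  simp

theorem dpair_finset_sum {ι : Type*} (s : Finset ι) (w : ι → ℝ) {d : ι → G → ℝ}
    (hd : ∀ i ∈ s, (support (d i)).Finite) (f : G → ℝ) :
    dpair (fun y => ∑ i ∈ s, w i * d i y) f = ∑ i ∈ s, w i * dpair (d i) f := by
  simp only [dpair, Finset.sum_mul]
  rw [finsum_sum_comm _ _ fun i hi => (hd i hi).subset fun y hy => ?_]
  · simp only [mul_finsum, mul_assoc]
  · exact support_mul_subset_right _ _ (support_mul_subset_left _ _ hy)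

theorem isDelta_finset_sum {ι : Type*} {s : Finset ι} {w : ι → ℝ} {d : ι → G → ℝ}
    (hw : ∀ i ∈ s, 0 ≤ w i) (hw₁ : ∑ i ∈ s, w i = 1) (hd : ∀ i ∈ s, IsDelta (d i)) :
    IsDelta fun y => ∑ i ∈ s, w i * d i y := by
  refine ⟨((s.finite_toSet.biUnion fun i hi => (hd i hi).1)).subset fun y hy => ?_,
    fun y => Finset.sum_nonneg fun i hi => mul_nonneg (hw i hi) ((hd i hi).2.1 y), ?_⟩
  · obtain ⟨i, hi, hy⟩ := Finset.exists_ne_zero_of_sum_ne_zero hy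
    exact mem_biUnion hi (right_ne_zero_of_mul hy)
  · have := dpair_finset_sum s w (fun i hi => (hd i hi).1) 1
    simp only [dpair, Pi.one_apply, mul_one] at this
    rw [this, ← hw₁]
    exact Finset.sum_congr rfl fun i hi => by rw [(hd i hi).2.2, mul_one]

end FinitelySupportedDensities

section Discretization

theorem measurableSet_disjointed {α ι : Type*} [MeasurableSpace α] [Preorder ι]
    [LocallyFiniteOrderBot ι] [Countable ι] {f : ι → Set α} (hf : ∀ i, MeasurableSet (f i))
    (i : ι) : MeasurableSet (disjointed f i) := by
  rw [disjointed_eq_inter_compl]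
  exact (hf i).inter (.iInter fun j => .iInter fun _ => (hf j).compl)

variable {G : Type*} [Group G] [TopologicalSpace G] [IsTopologicalGroup G]

theorem IsRUEB.continuous_of_mem {B : Set (G → ℝ)} (hB : IsRUEB B) {f : G → ℝ} (hf : f ∈ B) :
    Continuous f := by
  refine continuous_iff_continuousAt.mpr fun x => Metric.tendsto_nhds.mpr fun ε hε => ?_
  obtain ⟨U, hU, hUf⟩ := hB.2 (ε / 2) (half_pos hε)
  rw [← map_mul_right_nhds_one x, eventually_map]
  filter_upwards [hU] with u hu
  rw [Real.dist_eq, abs_sub_comm]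
  exact (hUf u hu f hf x).trans_lt (half_lt_self hε)

variable [MeasurableSpace G] [OpensMeasurableSpace G]

theorem IsRUEB.exists_measurable_partition {B : Set (G → ℝ)} (hB : IsRUEB B) {K : Set G}
    (hK : IsCompact K) {ε : ℝ} (hε : 0 < ε) :
    ∃ (n : ℕ) (x : Fin n → G) (A : Fin n → Set G), (∀ j, MeasurableSet (A j)) ∧
      Pairwise (Disjoint on A) ∧ K ⊆ ⋃ j, A j ∧ ∀ j, ∀ s ∈ A j, ∀ f ∈ B, |f s - f (x j)| ≤ ε := by
  obtain ⟨U, hU, hUf⟩ := hB.2 ε hε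
  obtain ⟨V, hVU, hVo, hV1⟩ := mem_nhds_iff.mp hU
  -- every `f ∈ B` takes values within `ε` of `f y` on `W y = V * {y}`
  set W : G → Set G := fun y => (· * y⁻¹) ⁻¹' V
  have hWo : ∀ y, IsOpen (W y) := fun y => hVo.preimage (continuous_mul_const _)
  obtain ⟨t, ht⟩ := hK.elim_finite_subcover W hWo
    fun s _ => mem_iUnion.mpr ⟨s, by simpa [W] using hV1⟩
  set x : Fin t.card → G := fun j => t.equivFin.symm j
  have hcover : K ⊆ ⋃ j, W (x j) := fun s hs => by
    obtain ⟨y, hy, hsy⟩ := mem_iUnion₂.mp (ht hs)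
    exact mem_iUnion.mpr ⟨t.equivFin ⟨y, hy⟩, by simpa [x] using hsy⟩
  refine ⟨t.card, x, disjointed (W ∘ x), measurableSet_disjointed fun j => (hWo _).measurableSet,
    disjoint_disjointed _, iUnion_disjointed (f := W ∘ x) ▸ hcover, fun j s hs f hf => ?_⟩
  have hsV : s * (x j)⁻¹ ∈ V := disjointed_subset _ j hs
  simpa [abs_sub_comm] using hUf _ (hVU hsV) f hf (x j)

theorem exists_isDelta_abs_integral_sub_dpair_le (m : Measure G) [IsProbabilityMeasure m]
    {K : Set G} (hK : IsCompact K) (hmK : ∀ᵐ s ∂m, s ∈ K) {B : Set (G → ℝ)} (hB : IsRUEB B)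
    {ε : ℝ} (hε : 0 < ε) :
    ∃ d : G → ℝ, IsDelta d ∧ ∀ f ∈ B, |∫ s, f s ∂m - dpair d f| ≤ ε := by
  obtain ⟨n, x, A, hA, hAd, hAK, hAf⟩ := hB.exists_measurable_partition hK hε
  have hmA : m.restrict (⋃ j, A j) = m :=
    Measure.restrict_eq_self_of_ae_mem (hmK.mono fun s hs => hAK hs)
  have hw₁ : ∑ j, m.real (A j) = 1 := by
    rw [← measureReal_iUnion_fintype hAd hA, ← measureReal_restrict_apply_univ, hmA,
      probReal_univ]
  refine ⟨fun y => ∑ j, m.real (A j) * ({x j} : Set G).indicator 1 y,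
    isDelta_finset_sum (fun j _ => measureReal_nonneg) hw₁
      fun j _ => isDelta_indicator_singleton _, fun f hf => ?_⟩
  obtain ⟨C, hC⟩ := hB.1
  have hfi : Integrable f m := .of_bound (hB.continuous_of_mem hf).aestronglyMeasurable C
    (ae_of_all _ (hC f hf))
  have hsplit : ∫ s, f s ∂m = ∑ j, ∫ s in A j, f s ∂m := by
    rw [← integral_iUnion_fintype hA hAd fun j => hfi.integrableOn, hmA]
  rw [dpair_finset_sum _ _ fun j _ => (isDelta_indicator_singleton _).1, hsplit,
    ← Finset.sum_sub_distrib]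
  simp only [dpair_indicator_singleton]
  calc |∑ j, (∫ s in A j, f s ∂m - m.real (A j) * f (x j))|
      = |∑ j, ∫ s in A j, (f s - f (x j)) ∂m| := by
        simp only [integral_sub hfi.integrableOn (integrable_const _), setIntegral_const,
          smul_eq_mul]
    _ ≤ ∑ j, ε * m.real (A j) := (Finset.abs_sum_le_sum_abs _ _).trans
        (Finset.sum_le_sum fun j _ => norm_setIntegral_le_of_norm_le_const
          (measure_lt_top _ _) fun s hs => (Real.norm_eq_abs _).trans_le (hAf j s hs f hf))
    _ = ε := by rw [← Finset.mul_sum, hw₁, mul_one]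

end Discretization

section Smoothing

variable {G : Type*} [Group G] [MeasurableSpace G]

noncomputable def smoothing (m : Measure G) (f : G → ℝ) (x : G) : ℝ := ∫ t, f (x * t) ∂m

theorem smoothing_comp_mul_left (m : Measure G) (f : G → ℝ) (g : G) :
    smoothing m (fun y => f (g * y)) = fun x => smoothing m f (g * x) := by
  funext x
  simp only [smoothing, mul_assoc]

theorem abs_smoothing_le (m : Measure G) [IsProbabilityMeasure m] {f : G → ℝ} {C : ℝ}
    (hf : ∀ x, |f x| ≤ C) (x : G) : |smoothing m f x| ≤ C := by
  simpa [smoothing] using norm_integral_le_of_norm_le_const (μ := m) (f := fun t => f (x * t))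
    (ae_of_all _ fun t => (Real.norm_eq_abs _).trans_le (hf (x * t)))

theorem smoothing_withDensity_ofReal {ν : Measure G} {θ : G → ℝ} (hθ : Measurable θ)
    (hθ₀ : 0 ≤ θ) (f : G → ℝ) (x : G) :
    smoothing (ν.withDensity fun t => ENNReal.ofReal (θ t)) f x = ∫ t, f (x * t) * θ t ∂ν := by
  rw [smoothing, integral_withDensity_eq_integral_toReal_smul hθ.ennreal_ofReal
    (ae_of_all _ fun _ => ENNReal.ofReal_lt_top)]
  simp [ENNReal.toReal_ofReal (hθ₀ _), mul_comm]

variable [TopologicalSpace G] [IsTopologicalGroup G] [BorelSpace G]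

theorem exists_isDelta_abs_smoothing_sub_dpair_le (m : Measure G) [IsProbabilityMeasure m]
    {K : Set G} (hK : IsCompact K) (hmK : ∀ᵐ t ∂m, t ∈ K) {B : Set (G → ℝ)} (hB : IsRUEB B)
    {ε : ℝ} (hε : 0 < ε) (x : G) :
    ∃ d : G → ℝ, IsDelta d ∧ ∀ f ∈ B, |smoothing m f x - dpair d f| ≤ ε := by
  have hx := measurableEmbedding_mulLeft x
  have : IsProbabilityMeasure (m.map (x * ·)) :=
    Measure.isProbabilityMeasure_map hx.measurable.aemeasurable
  obtain ⟨d, hd, hdf⟩ := exists_isDelta_abs_integral_sub_dpair_le (m.map (x * ·))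
    (hK.image (continuous_const_mul x))
    (hx.ae_map_iff.mpr (hmK.mono fun t ht => mem_image_of_mem _ ht)) hB hε
  exact ⟨d, hd, fun f hf => by simpa [smoothing, hx.integral_map] using hdf f hf⟩

theorem mem_MeanUR_dpair_smoothing (m : Measure G) [IsProbabilityMeasure m]
    {K : Set G} (hK : IsCompact K) (hmK : ∀ᵐ t ∂m, t ∈ K) {μ : G → ℝ} (hμ : IsDelta μ) :
    (fun f => dpair μ (smoothing m f)) ∈ MeanUR G := by
  refine mem_MeanUR_of_forall_exists_isDelta fun B hB ε hε => ?_
  choose d hd hdf using exists_isDelta_abs_smoothing_sub_dpair_le m hK hmK hB hε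
  obtain ⟨hfin, hμ₀, hμ₁⟩ := hμ
  have hμF : ∑ x ∈ hfin.toFinset, μ x = 1 := by
    rw [← hμ₁, finsum_eq_sum_of_support_subset _ hfin.coe_toFinset.ge]
  refine ⟨fun y => ∑ x ∈ hfin.toFinset, μ x * d x y,
    isDelta_finset_sum (fun x _ => hμ₀ x) hμF fun x _ => hd x, fun f hf => ?_⟩
  rw [dpair_finset_sum _ _ fun x _ => (hd x).1, dpair,
    finsum_eq_sum_of_support_subset _ ((support_mul_subset_left _ _).trans hfin.coe_toFinset.ge),
    ← Finset.sum_sub_distrib]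
  calc |∑ x ∈ hfin.toFinset, (μ x * smoothing m f x - μ x * dpair (d x) f)|
      ≤ ∑ x ∈ hfin.toFinset, μ x * ε := (Finset.abs_sum_le_sum_abs _ _).trans
        (Finset.sum_le_sum fun x _ => by
          rw [← mul_sub, abs_mul, abs_of_nonneg (hμ₀ x)]
          exact mul_le_mul_of_nonneg_left (hdf x f hf) (hμ₀ x))
    _ = ε := by rw [← Finset.sum_mul, hμF, one_mul]

end Smoothing

section HaarSmoothing

theorem exists_continuous_hasCompactSupport_integral_eq_one {X : Type*} [TopologicalSpace X]
    [RegularSpace X] [LocallyCompactSpace X] [Nonempty X] [MeasurableSpace X]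
    [OpensMeasurableSpace X] (ν : Measure X) [IsFiniteMeasureOnCompacts ν] [ν.IsOpenPosMeasure] :
    ∃ θ : X → ℝ, Continuous θ ∧ HasCompactSupport θ ∧ 0 ≤ θ ∧ ∫ x, θ x ∂ν = 1 := by
  obtain ⟨f, hfs, hf₀, hfx⟩ := exists_continuous_nonneg_pos (Classical.arbitrary X)
  have hpos := f.continuous.integral_pos_of_hasCompactSupport_nonneg_nonzero (μ := ν) hfs hf₀ hfx
  refine ⟨fun x => f x * (∫ y, f y ∂ν)⁻¹, f.continuous.mul continuous_const, hfs.mul_right,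
    fun x => mul_nonneg (hf₀ x) (inv_nonneg.mpr hpos.le), ?_⟩
  rw [integral_mul_const, mul_inv_cancel₀ hpos.ne']

theorem isProbabilityMeasure_withDensity_ofReal {α : Type*} [MeasurableSpace α] {ν : Measure α}
    {θ : α → ℝ} (hθi : Integrable θ ν) (hθ₀ : 0 ≤ θ) (hθ₁ : ∫ x, θ x ∂ν = 1) :
    IsProbabilityMeasure (ν.withDensity fun x => ENNReal.ofReal (θ x)) := by
  constructor
  rw [withDensity_apply _ MeasurableSet.univ, Measure.restrict_univ,
    ← ofReal_integral_eq_lintegral_ofReal hθi (ae_of_all _ hθ₀), hθ₁, ENNReal.ofReal_one]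

variable {G : Type*} [Group G] [TopologicalSpace G] [IsTopologicalGroup G]

theorem HasCompactSupport.exists_nhds_one_abs_sub_lt {θ : G → ℝ} (hθs : HasCompactSupport θ)
    (hθc : Continuous θ) {ε : ℝ} (hε : 0 < ε) :
    ∃ U ∈ 𝓝 (1 : G), ∀ u ∈ U, ∀ t, |θ (u * t) - θ t| < ε := by
  let _ := IsTopologicalGroup.rightUniformSpace G
  obtain ⟨U, hU, hUθ⟩ := mem_comap.mp
    (hθs.uniformContinuous_of_continuous hθc (Metric.dist_mem_uniformity hε))
  refine ⟨U, hU, fun u hu t => ?_⟩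
  have := @hUθ (t, u * t) (by simpa using hu)
  simpa [Real.dist_eq, abs_sub_comm] using this

variable [LocallyCompactSpace G] [MeasurableSpace G]

theorem HasCompactSupport.exists_nhds_one_integral_abs_sub_le (ν : Measure G)
    [IsFiniteMeasureOnCompacts ν] {θ : G → ℝ} (hθs : HasCompactSupport θ) (hθc : Continuous θ)
    {ε : ℝ} (hε : 0 < ε) : ∃ U ∈ 𝓝 (1 : G), ∀ u ∈ U, ∫ t, |θ (u * t) - θ t| ∂ν ≤ ε := by
  obtain ⟨W, hWc, hW⟩ := exists_compact_mem_nhds (1 : G)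
  have hK : IsCompact (W * tsupport θ) := hWc.mul hθs
  have hKν := measureReal_nonneg (μ := ν) (s := W * tsupport θ)
  obtain ⟨V, hV, hVθ⟩ := hθs.exists_nhds_one_abs_sub_lt hθc
    (div_pos hε (by linarith : 0 < ν.real (W * tsupport θ) + 1))
  refine ⟨W⁻¹ ∩ V, inter_mem (inv_mem_nhds_one G hW) hV, fun u ⟨huW, huV⟩ => ?_⟩
  have hzero : ∀ t ∉ W * tsupport θ, |θ (u * t) - θ t| = 0 := fun t ht => by
    have h₁ : θ t = 0 := image_eq_zero_of_notMem_tsupport fun h =>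
      ht ⟨1, mem_of_mem_nhds hW, t, h, one_mul t⟩
    have h₂ : θ (u * t) = 0 := image_eq_zero_of_notMem_tsupport fun h =>
      ht ⟨u⁻¹, huW, u * t, h, inv_mul_cancel_left u t⟩
    simp [h₁, h₂]
  rw [← setIntegral_eq_integral_of_forall_compl_eq_zero hzero]
  calc ∫ t in W * tsupport θ, |θ (u * t) - θ t| ∂ν
      ≤ ‖∫ t in W * tsupport θ, |θ (u * t) - θ t| ∂ν‖ := Real.le_norm_self _
    _ ≤ ε / (ν.real (W * tsupport θ) + 1) * ν.real (W * tsupport θ) :=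
        norm_setIntegral_le_of_norm_le_const hK.measure_lt_top fun t _ => by
          rw [Real.norm_eq_abs, abs_abs]
          exact (hVθ u huV t).le
    _ ≤ ε := by
        rw [div_mul_eq_mul_div, div_le_iff₀ (by linarith)]
        nlinarith

variable [BorelSpace G]

theorem IsRUEB.isLUEB_image_smoothing_withDensity (ν : Measure G) [ν.IsMulLeftInvariant]
    [IsFiniteMeasureOnCompacts ν] {θ : G → ℝ} (hθs : HasCompactSupport θ) (hθc : Continuous θ)
    (hθ₀ : 0 ≤ θ) (hθ₁ : ∫ t, θ t ∂ν = 1) {B : Set (G → ℝ)} (hB : IsRUEB B) :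
    IsLUEB (smoothing (ν.withDensity fun t => ENNReal.ofReal (θ t)) '' B) := by
  have hθi : Integrable θ ν := hθc.integrable_of_hasCompactSupport hθs
  have := isProbabilityMeasure_withDensity_ofReal hθi hθ₀ hθ₁
  obtain ⟨C, hC⟩ := hB.1
  refine ⟨⟨C, ?_⟩, fun ε hε => ?_⟩
  · rintro _ ⟨f, hf, rfl⟩ x
    exact abs_smoothing_le _ (hC f hf) x
  set C' := max C 0 + 1
  have hC' : 0 < C' := by positivity
  obtain ⟨U, hU, hUθ⟩ := hθs.exists_nhds_one_integral_abs_sub_le ν hθc (div_pos hε hC')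
  refine ⟨U⁻¹, inv_mem_nhds_one G hU, ?_⟩
  rintro u hu _ ⟨f, hf, rfl⟩ x
  have hfx : ∀ t, ‖f (x * t)‖ ≤ C' := fun t =>
    (hC f hf _).trans (by linarith [le_max_left C 0])
  have hfm : AEStronglyMeasurable (fun t => f (x * t)) ν :=
    ((hB.continuous_of_mem hf).comp (continuous_const_mul x)).aestronglyMeasurable
  have htrans : ∫ t, f (x * u * t) * θ t ∂ν = ∫ t, f (x * t) * θ (u⁻¹ * t) ∂ν := by
    rw [← integral_mul_left_eq_self (fun t => f (x * t) * θ (u⁻¹ * t)) u]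
    simp [mul_assoc]
  simp only [smoothing_withDensity_ofReal hθc.measurable hθ₀]
  rw [htrans, ← integral_sub (hθi.bdd_mul hfm (ae_of_all _ hfx))
    ((hθi.comp_mul_left u⁻¹).bdd_mul hfm (ae_of_all _ hfx))]
  calc |∫ t, (f (x * t) * θ t - f (x * t) * θ (u⁻¹ * t)) ∂ν|
      ≤ ∫ t, C' * |θ (u⁻¹ * t) - θ t| ∂ν :=
        norm_integral_le_of_norm_le (f := fun t => f (x * t) * θ t - f (x * t) * θ (u⁻¹ * t))
          (g := fun t => C' * |θ (u⁻¹ * t) - θ t|)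
          (((hθi.comp_mul_left u⁻¹).sub hθi).abs.const_mul C')
          (ae_of_all _ fun t => by
            rw [← mul_sub, norm_mul, Real.norm_eq_abs, abs_sub_comm]
            exact mul_le_mul_of_nonneg_right (hfx t) (abs_nonneg _))
    _ ≤ C' * (ε / C') := by
        rw [integral_const_mul]
        exact mul_le_mul_of_nonneg_left (hUθ u⁻¹ hu) hC'.le
    _ = ε := mul_div_cancel₀ ε hC'.ne'

theorem exists_isProbabilityMeasure_isLUEB_image_smoothing :
    ∃ m : Measure G, IsProbabilityMeasure m ∧ (∃ K, IsCompact K ∧ ∀ᵐ t ∂m, t ∈ K) ∧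
      ∀ B : Set (G → ℝ), IsRUEB B → IsLUEB (smoothing m '' B) := by
  obtain ⟨θ, hθc, hθs, hθ₀, hθ₁⟩ :=
    exists_continuous_hasCompactSupport_integral_eq_one (Measure.haar : Measure G)
  refine ⟨_, isProbabilityMeasure_withDensity_ofReal (hθc.integrable_of_hasCompactSupport hθs)
      hθ₀ hθ₁, ⟨tsupport θ, hθs, ?_⟩,
    fun B hB => hB.isLUEB_image_smoothing_withDensity _ hθs hθc hθ₀ hθ₁⟩
  rw [ae_withDensity_iff (by fun_prop)]
  exact ae_of_all _ fun t ht => subset_tsupport θ fun h => ht (by simp [h])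

end HaarSmoothing

theorem skew_amenable_implies_amenable_general {G : Type*} [Group G] [TopologicalSpace G]
    [IsTopologicalGroup G] [LocallyCompactSpace G]
    {X : Type*} [TopologicalSpace X]
    [MulAction G X]
    (h : SkewAmenableAction (fun (g : G) (x : X) => g • x)) :
    AmenableAction (fun (g : G) (x : X) => g • x) := by
  borelize G
  obtain ⟨ι, _, hι, hdir, μ, hmean, hcont, hequiv⟩ := h
  obtain ⟨m, _, ⟨K, hK, hmK⟩, hLUEB⟩ := exists_isProbabilityMeasure_isLUEB_image_smoothing (G := G)
  refine ⟨ι, _, hι, hdir, fun i x f => μ i x (smoothing m f),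
    fun i x => precomp_mem_MeanUR hLUEB (fun _ hν => mem_MeanUR_dpair_smoothing m hK hmK hν)
      (hmean i x),
    fun i => (hcont i).precomp_uebTop hLUEB,
    fun g B hB ε hε => ?_⟩
  obtain ⟨i₀, hi₀⟩ := hequiv g _ (hLUEB B hB) ε hε
  refine ⟨i₀, fun i hi x f hf => ?_⟩
  simpa only [actF, smoothing_comp_mul_left] using hi₀ i hi x _ (mem_image_of_mem _ hf)

/-- Corollary 4.8: every skew-amenable continuous action of a locally compact group on a
compact space is amenable. -/
theorem skew_amenable_implies_amenable {G : Type*} [Group G] [TopologicalSpace G]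
    [IsTopologicalGroup G] [LocallyCompactSpace G] [T2Space G]
    {X : Type*} [TopologicalSpace X] [CompactSpace X] [T2Space X]
    [MulAction G X] [ContinuousSMul G X]
    (h : SkewAmenableAction (fun (g : G) (x : X) => g • x)) :
    AmenableAction (fun (g : G) (x : X) => g • x) :=
  skew_amenable_implies_amenable_general h
end

section
/- Let H be a topological subgroup of a topological group G, and suppose G acts continuously and amenably on a compact Hausdorff space X. Assume H is amenably embedded in G, in the following sense (equivalent, via the universal property of the Samuel compactification of G with its right uniformity, to amenability of the H-action on that compactification): there is a net of maps ν_j : G → Δ(H) (j ∈ J) such that each ν_j has uniformly finite support (⋃_{g∈G} spt(ν_j(g)) is finite), each ν_j is uniformly continuous from the right uniformity of G to the UEB uniformity on Δ(H) inside the dual of RUCB(H), and for every h ∈ H and every RUEB subset B of the bounded functions on H, sup_{g∈G} sup_{f∈B} |⟨h·ν_j(g), f⟩ − ⟨ν_j(hg), f⟩| → 0 as j → J. Then the restricted action H ↷ X is amenable. -/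
/-!
For a mean `ξ` on `G`, the push-forward `f ↦ ξ (g ↦ ⟨ν(g), f⟩)` is a mean on `H`: uniformly
finite support makes `ν` send `Δ(G)` to `Δ(H)`, and UEB-uniform continuity of `ν` makes
`f ↦ (g ↦ ⟨ν(g), f⟩)` send RUEB sets to RUEB sets, so the push-forward is UEB-continuous and
preserves the closures. The maps `x ↦ push_{ν_j} (μ_i x)` are approximately `H`-equivariant: since
means are 1-Lipschitz for the sup norm on RUEB sets, the defect is at most that of `ν_j` plus that
of `μ_i` on the RUEB set `{g ↦ ⟨ν_j(g), f⟩ : f ∈ B}`. As `i` must be chosen depending on `j`, the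
net is indexed by `J × (J → ι)`.
-/

open Filter Topology MeasureTheory UniformConvergence

instance Prod.isDirectedOrder {α β : Type*} [Preorder α] [Preorder β] [IsDirectedOrder α]
    [IsDirectedOrder β] : IsDirectedOrder (α × β) where
  directed a b :=
    let ⟨c, hac, hbc⟩ := exists_ge_ge a.1 b.1
    let ⟨d, had, hbd⟩ := exists_ge_ge a.2 b.2
    ⟨(c, d), ⟨hac, had⟩, ⟨hbc, hbd⟩⟩

instance Pi.isDirectedOrder {ι : Type*} {α : ι → Type*} [∀ i, Preorder (α i)]
    [∀ i, IsDirectedOrder (α i)] : IsDirectedOrder (∀ i, α i) where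
  directed a b := by
    choose c hac hbc using fun i => exists_ge_ge (a i) (b i)
    exact ⟨c, hac, hbc⟩

open scoped Uniformity

section Pairing

variable {G : Type*}

theorem dpair_eq_sum (μ f : G → ℝ) {s : Finset G} (hs : Function.support μ ⊆ s) :
    dpair μ f = ∑ x ∈ s, μ x * f x :=
  finsum_eq_sum_of_support_subset _ ((Function.support_mul_subset_left μ f).trans hs)

theorem IsDelta.sum_eq_one {μ : G → ℝ} (hμ : IsDelta μ) {s : Finset G}
    (hs : Function.support μ ⊆ s) : ∑ x ∈ s, μ x = 1 := by
  rw [← hμ.2.2, finsum_eq_sum_of_support_subset μ hs]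

theorem IsDelta.abs_dpair_le {μ f : G → ℝ} {C : ℝ} (hμ : IsDelta μ) (hf : ∀ x, |f x| ≤ C) :
    |dpair μ f| ≤ C := by
  have hs : Function.support μ ⊆ hμ.1.toFinset := by simp
  calc |dpair μ f| = |∑ x ∈ hμ.1.toFinset, μ x * f x| := by rw [dpair_eq_sum μ f hs]
    _ ≤ ∑ x ∈ hμ.1.toFinset, μ x * C := by
        refine (Finset.abs_sum_le_sum_abs _ _).trans (Finset.sum_le_sum fun x _ => ?_)
        rw [abs_mul, abs_of_nonneg (hμ.2.1 x)]
        exact mul_le_mul_of_nonneg_left (hf x) (hμ.2.1 x)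
    _ = C := by rw [← Finset.sum_mul, hμ.sum_eq_one hs, one_mul]

theorem IsDelta.abs_dpair_sub_le {μ f f' : G → ℝ} {δ : ℝ} (hμ : IsDelta μ)
    (hd : ∀ x, |f x - f' x| ≤ δ) : |dpair μ f - dpair μ f'| ≤ δ := by
  have hs : Function.support μ ⊆ hμ.1.toFinset := by simp
  have hsub : dpair μ f - dpair μ f' = dpair μ (f - f') := by
    simp only [dpair_eq_sum _ _ hs, ← Finset.sum_sub_distrib, Pi.sub_apply, mul_sub]
  rw [hsub]
  exact hμ.abs_dpair_le hd

theorem dpair_comp_mul_left [Group G] (g : G) (μ f : G → ℝ) :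
    dpair μ (fun x => f (g * x)) = dpair (actD g μ) f := by
  unfold dpair actD
  rw [← finsum_comp_equiv (Equiv.mulLeft g) (f := fun x => μ (g⁻¹ * x) * f x)]
  simp

end Pairing

noncomputable def pairWith {G H : Type*} (ν : G → H → ℝ) (f : H → ℝ) : G → ℝ :=
  fun g => dpair (ν g) f

/-- `σ` pushed forward along `ν`, provided `S ⊇ spt σ`. -/
noncomputable def pushDelta {G H : Type*} (S : Finset G) (ν : G → H → ℝ) (σ : G → ℝ) :
    H → ℝ :=
  fun t => ∑ g ∈ S, σ g * ν g t

noncomputable def pushMean {G H : Type*} (ν : G → H → ℝ) (ξ : (G → ℝ) → ℝ) : (H → ℝ) → ℝ :=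
  fun f => ξ (pairWith ν f)

section PushDelta

variable {G H : Type*} {ν : G → H → ℝ} {σ : G → ℝ} {S : Finset G} {T : Finset H}

theorem support_pushDelta_subset (hT : ∀ g, Function.support (ν g) ⊆ T) :
    Function.support (pushDelta S ν σ) ⊆ T := by
  intro t ht
  by_contra htT
  refine ht (Finset.sum_eq_zero fun g _ => ?_)
  rw [Function.notMem_support.1 fun h => htT (hT g h), mul_zero]

theorem isDelta_pushDelta (hσ : IsDelta σ) (hS : Function.support σ ⊆ S)
    (hν : ∀ g, IsDelta (ν g)) (hT : ∀ g, Function.support (ν g) ⊆ T) :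
    IsDelta (pushDelta S ν σ) := by
  refine ⟨T.finite_toSet.subset (support_pushDelta_subset hT),
    fun t => Finset.sum_nonneg fun g _ => mul_nonneg (hσ.2.1 g) ((hν g).2.1 t), ?_⟩
  rw [finsum_eq_sum_of_support_subset _ (support_pushDelta_subset hT)]
  unfold pushDelta
  rw [Finset.sum_comm]
  simp_rw [← Finset.mul_sum, (hν _).sum_eq_one (hT _), mul_one]
  exact hσ.sum_eq_one hS

theorem dpair_pushDelta (hS : Function.support σ ⊆ S)
    (hT : ∀ g, Function.support (ν g) ⊆ T) (f : H → ℝ) :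
    dpair (pushDelta S ν σ) f = dpair σ (pairWith ν f) := by
  simp only [pairWith, dpair_eq_sum _ _ hS, dpair_eq_sum _ _ (hT _),
    dpair_eq_sum _ _ (support_pushDelta_subset hT), pushDelta, Finset.sum_mul, Finset.mul_sum]
  rw [Finset.sum_comm]
  exact Finset.sum_congr rfl fun _ _ => Finset.sum_congr rfl fun _ _ => by ring

end PushDelta

section RUEB

variable {G H : Type*} [Group G] [TopologicalSpace G] [Group H] [TopologicalSpace H]

theorem IsRUEB.image_comp_mul_left [IsTopologicalGroup G] {B : Set (G → ℝ)} (hB : IsRUEB B)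
    (c : G) : IsRUEB ((fun f x => f (c * x)) '' B) := by
  obtain ⟨⟨C, hC⟩, hequi⟩ := hB
  refine ⟨⟨C, by rintro _ ⟨f, hf, rfl⟩ x; exact hC f hf _⟩, fun ε hε => ?_⟩
  obtain ⟨U, hU, hUε⟩ := hequi ε hε
  have hconj : Tendsto (fun u : G => c * u * c⁻¹) (𝓝 1) (𝓝 1) := by
    simpa using ((continuous_const_mul c).mul_const c⁻¹).tendsto 1
  refine ⟨_, hconj hU, ?_⟩
  rintro u hu _ ⟨f, hf, rfl⟩ x
  have hmul : c * (u * x) = c * u * c⁻¹ * (c * x) := by group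
  simpa only [hmul] using hUε _ hu f hf (c * x)

theorem IsRUEB.image_pairWith {ν : G → H → ℝ} (hν : ∀ g, IsDelta (ν g)) {B : Set (H → ℝ)}
    (hB : IsRUEB B)
    (hνB : ∀ ε > (0 : ℝ), ∃ U ∈ 𝓝 (1 : G), ∀ x y : G, x * y⁻¹ ∈ U →
      ∀ f ∈ B, |dpair (ν x) f - dpair (ν y) f| ≤ ε) :
    IsRUEB (pairWith ν '' B) := by
  obtain ⟨C, hC⟩ := hB.1
  refine ⟨⟨C, by rintro _ ⟨f, hf, rfl⟩ g; exact (hν g).abs_dpair_le (hC f hf)⟩,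
    fun ε hε => ?_⟩
  obtain ⟨U, hU, hUε⟩ := hνB ε hε
  refine ⟨U, hU, ?_⟩
  rintro u hu _ ⟨f, hf, rfl⟩ g
  rw [abs_sub_comm]
  exact hUε (u * g) g (by simpa using hu) f hf

end RUEB

section UEB

variable {G H : Type*} [Group G] [TopologicalSpace G] [Group H] [TopologicalSpace H]

theorem uniformContinuous_restrict_of_isRUEB {B : Set (G → ℝ)} (hB : IsRUEB B) :
    UniformContinuous[uebUniformityR G, _]
      fun ξ : (G → ℝ) → ℝ => UniformFun.ofFun fun f : B => ξ f :=
  uniformContinuous_iInf_dom (i := B) (uniformContinuous_iInf_dom (i := hB)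
    uniformContinuous_comap)

theorem continuous_apply_of_isRUEB {B : Set (G → ℝ)} (hB : IsRUEB B) {φ : G → ℝ}
    (hφ : φ ∈ B) : Continuous[uebTopR G, _] fun ξ : (G → ℝ) → ℝ => ξ φ :=
  let _ := uebUniformityR G
  ((UniformFun.uniformContinuous_eval ℝ (⟨φ, hφ⟩ : B)).comp
    (uniformContinuous_restrict_of_isRUEB hB)).continuous

theorem abs_sub_le_of_mem_meanUR {ξ : (G → ℝ) → ℝ} (hξ : ξ ∈ MeanUR G)
    {B₁ B₂ : Set (G → ℝ)} (hB₁ : IsRUEB B₁) (hB₂ : IsRUEB B₂) {φ ψ : G → ℝ}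
    (hφ : φ ∈ B₁) (hψ : ψ ∈ B₂) {δ : ℝ} (hd : ∀ g, |φ g - ψ g| ≤ δ) : |ξ φ - ξ ψ| ≤ δ := by
  let _ := uebTopR G
  have hclosed : IsClosed {η : (G → ℝ) → ℝ | |η φ - η ψ| ≤ δ} :=
    isClosed_Iic.preimage
      ((continuous_apply_of_isRUEB hB₁ hφ).sub (continuous_apply_of_isRUEB hB₂ hψ)).abs
  refine closure_minimal ?_ hclosed hξ
  rintro _ ⟨μ, hμ, rfl⟩
  exact hμ.abs_dpair_sub_le hd

theorem uniformContinuous_precomp_of_isRUEB_image {Φ : (H → ℝ) → G → ℝ}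
    (hΦ : ∀ B, IsRUEB B → IsRUEB (Φ '' B)) :
    UniformContinuous[uebUniformityR G, uebUniformityR H] fun ξ f => ξ (Φ f) :=
  let _ := uebUniformityR G
  uniformContinuous_iInf_rng.2 fun B => uniformContinuous_iInf_rng.2 fun hB =>
    uniformContinuous_comap' <|
      (UniformFun.precomp_uniformContinuous (f := fun f : B => (⟨Φ f, f, f.2, rfl⟩ : Φ '' B))).comp
        (uniformContinuous_restrict_of_isRUEB (hΦ B hB))

end UEB

def UEBUniformContinuous {G H : Type*} [Group G] [TopologicalSpace G] [Group H]
    [TopologicalSpace H] (ν : G → H → ℝ) : Prop :=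
  ∀ B : Set (H → ℝ), IsRUEB B → ∀ ε > (0 : ℝ), ∃ U ∈ 𝓝 (1 : G), ∀ x y : G, x * y⁻¹ ∈ U →
    ∀ f ∈ B, |dpair (ν x) f - dpair (ν y) f| ≤ ε

section PushMean

variable {G H : Type*} [Group G] [TopologicalSpace G] [Group H] [TopologicalSpace H]
  {ν : G → H → ℝ}

theorem continuous_pushMean (hν : ∀ g, IsDelta (ν g)) (hνu : UEBUniformContinuous ν) :
    Continuous[uebTopR G, uebTopR H] (pushMean ν) :=
  let _ := uebUniformityR G
  let _ := uebUniformityR H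
  (uniformContinuous_precomp_of_isRUEB_image fun B hB =>
    hB.image_pairWith hν (hνu B hB)).continuous

theorem pushMean_mem_meanUR (hν : ∀ g, IsDelta (ν g))
    (hfin : (⋃ g, Function.support (ν g)).Finite) (hνu : UEBUniformContinuous ν)
    {ξ : (G → ℝ) → ℝ} (hξ : ξ ∈ MeanUR G) : pushMean ν ξ ∈ MeanUR H := by
  refine @map_mem_closure _ _ (uebTopR G) (uebTopR H) _ _ _ _ (continuous_pushMean hν hνu) hξ ?_
  rintro _ ⟨σ, hσ, rfl⟩
  have hS : Function.support σ ⊆ hσ.1.toFinset := by simp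
  have hT : ∀ g, Function.support (ν g) ⊆ hfin.toFinset := fun g => by
    simpa using Set.subset_iUnion (fun g => Function.support (ν g)) g
  exact ⟨pushDelta _ ν σ, isDelta_pushDelta hσ hS hν hT,
    funext fun f => dpair_pushDelta hS hT f⟩

end PushMean

theorem abs_actF_pushMean_sub_le {G : Type*} [Group G] [TopologicalSpace G]
    [IsTopologicalGroup G] {H : Subgroup G} {ν : G → H → ℝ} (hν : ∀ g, IsDelta (ν g))
    (hνu : UEBUniformContinuous ν) {ξ : (G → ℝ) → ℝ} (hξ : ξ ∈ MeanUR G) (h : H)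
    {B : Set (H → ℝ)} (hB : IsRUEB B) {f : H → ℝ} (hf : f ∈ B) {δ : ℝ}
    (hδ : ∀ g, |dpair (actD h (ν g)) f - dpair (ν (h * g)) f| ≤ δ) :
    |actF h (pushMean ν ξ) f - actF (h : G) ξ (pairWith ν f)| ≤ δ :=
  have hB' := hB.image_comp_mul_left h
  abs_sub_le_of_mem_meanUR hξ (hB'.image_pairWith hν (hνu _ hB'))
    ((hB.image_pairWith hν (hνu B hB)).image_comp_mul_left (h : G))
    ⟨_, ⟨f, hf, rfl⟩, rfl⟩ ⟨_, ⟨f, hf, rfl⟩, rfl⟩ fun g => by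
      rw [pairWith, dpair_comp_mul_left]
      exact hδ g

theorem amenably_embedded_restriction_general {G : Type*} [Group G] [TopologicalSpace G]
    [IsTopologicalGroup G]
    {X : Type*} [TopologicalSpace X] [MulAction G X] (H : Subgroup G)
    (hGX : AmenableAction fun (g : G) (x : X) => g • x)
    (hemb : ∃ (J : Type) (pJ : Preorder J) (_ : Nonempty J)
      (_ : IsDirected J fun a b => pJ.le a b)
      (ν : J → G → ↥H → ℝ),
      (∀ (j : J) (g : G), IsDelta (ν j g)) ∧
      (∀ j : J, (⋃ g : G, Function.support (ν j g)).Finite) ∧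
      (∀ (j : J) (B : Set (↥H → ℝ)), IsRUEB B → ∀ ε > (0 : ℝ),
        ∃ U ∈ nhds (1 : G), ∀ x y : G, x * y⁻¹ ∈ U →
          ∀ f ∈ B, |dpair (ν j x) f - dpair (ν j y) f| ≤ ε) ∧
      (∀ (h : ↥H) (B : Set (↥H → ℝ)), IsRUEB B → ∀ ε > (0 : ℝ),
        ∃ j₀, ∀ j, pJ.le j₀ j → ∀ g : G, ∀ f ∈ B,
          |dpair (actD h (ν j g)) f - dpair (ν j ((h : G) * g)) f| ≤ ε)) :
    AmenableAction fun (h : ↥H) (x : X) => (h : G) • x := by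
  obtain ⟨ι, _, _, _, μ, hμ, hμc, hμequi⟩ := hGX
  obtain ⟨J, _, _, _, ν, hν, hνfin, hνu, hνequi⟩ := hemb
  refine ⟨J × (J → ι), inferInstance, inferInstance, inferInstance,
    fun k x => pushMean (ν k.1) (μ (k.2 k.1) x),
    fun k x => pushMean_mem_meanUR (hν k.1) (hνfin k.1) (hνu k.1) (hμ _ x),
    fun k => @Continuous.comp _ _ _ _ (uebTopR G) (uebTopR H) _ _
      (continuous_pushMean (hν k.1) (hνu k.1)) (hμc _), ?_⟩
  intro h B hB ε hε
  obtain ⟨j₀, hj₀⟩ := hνequi h B hB (ε / 2) (half_pos hε)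
  choose i₀ hi₀ using fun j =>
    hμequi h _ (hB.image_pairWith (hν j) (hνu j B hB)) (ε / 2) (half_pos hε)
  refine ⟨(j₀, i₀), ?_⟩
  rintro ⟨j, i⟩ ⟨hj, hi⟩ x f hf
  have hν_equi := abs_actF_pushMean_sub_le (hν j) (hνu j) (hμ (i j) x) h hB hf
    fun g => hj₀ j hj g f hf
  have hμ_equi := hi₀ j (i j) (hi j) x _ ⟨f, hf, rfl⟩
  exact (abs_sub_le _ _ _).trans (add_halves ε ▸ add_le_add hν_equi hμ_equi)

/-- Theorem 5.3: if `H` is amenably embedded in `G` and `G ↷ X` is amenable, then the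
restricted action `H ↷ X` is amenable. -/
theorem amenably_embedded_restriction {G : Type*} [Group G] [TopologicalSpace G]
    [IsTopologicalGroup G]
    {X : Type*} [TopologicalSpace X] [CompactSpace X] [T2Space X]
    [MulAction G X] [ContinuousSMul G X] (H : Subgroup G)
    (hGX : AmenableAction fun (g : G) (x : X) => g • x)
    (hemb : ∃ (J : Type) (pJ : Preorder J) (_ : Nonempty J)
      (_ : IsDirected J fun a b => pJ.le a b)
      (ν : J → G → ↥H → ℝ),
      (∀ (j : J) (g : G), IsDelta (ν j g)) ∧
      (∀ j : J, (⋃ g : G, Function.support (ν j g)).Finite) ∧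
      (∀ (j : J) (B : Set (↥H → ℝ)), IsRUEB B → ∀ ε > (0 : ℝ),
        ∃ U ∈ nhds (1 : G), ∀ x y : G, x * y⁻¹ ∈ U →
          ∀ f ∈ B, |dpair (ν j x) f - dpair (ν j y) f| ≤ ε) ∧
      (∀ (h : ↥H) (B : Set (↥H → ℝ)), IsRUEB B → ∀ ε > (0 : ℝ),
        ∃ j₀, ∀ j, pJ.le j₀ j → ∀ g : G, ∀ f ∈ B,
          |dpair (actD h (ν j g)) f - dpair (ν j ((h : G) * g)) f| ≤ ε)) :
    AmenableAction fun (h : ↥H) (x : X) => (h : G) • x :=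
  amenably_embedded_restriction_general H hGX hemb
end

section
/- Every open subgroup H of a topological group G is well-placed in G. Moreover, one can choose the witnessing map of the form x ↦ δ_{φ(x)} for an H-left-equivariant map φ : G → H (namely φ(x) = x·σ(Hx)⁻¹ for a section σ of the right-coset map) which is uniformly continuous for the right uniformities of G and H. -/
open Filter Topology MeasureTheory UniformConvergence
open scoped Classical

/-!
Write `σ(x)` for a chosen representative of the right coset `Hx` and `φ(x) = x σ(x)⁻¹ ∈ H`.
Whenever `x y⁻¹ ∈ H` the representatives agree, so `φ(x) φ(y)⁻¹ = x y⁻¹`; this gives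
`H`-equivariance, and, since `H` is open, every identity neighbourhood of `H` is one of `G`,
so `φ` is right-uniformly continuous. The Dirac map `a ↦ δ_a` is right-uniformly continuous into
the UEB uniformity because `δ_a(f) - δ_b(f) = f((ab⁻¹) b) - f(b)`, which is controlled by the
right equicontinuity of an RUEB set; composing the two gives the witness.
-/

open QuotientGroup

namespace Subgroup

variable {G : Type*} [Group G] (H : Subgroup G)

noncomputable def rightCosetRep (x : G) : G :=
  (⟦x⟧ : Quotient (rightRel H)).out

theorem mul_inv_rightCosetRep_mem (x : G) : x * (H.rightCosetRep x)⁻¹ ∈ H :=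
  rightRel_apply.mp (Quotient.mk_out x)

theorem rightCosetRep_eq_of_mul_inv_mem {x y : G} (h : x * y⁻¹ ∈ H) :
    H.rightCosetRep x = H.rightCosetRep y :=
  congrArg Quotient.out (Quotient.sound (rightRel_apply.mpr (by simpa using H.inv_mem h)))

noncomputable def rightCosetCoord (x : G) : H :=
  ⟨x * (H.rightCosetRep x)⁻¹, H.mul_inv_rightCosetRep_mem x⟩

theorem coe_rightCosetCoord_mul_inv {x y : G} (h : x * y⁻¹ ∈ H) :
    ((H.rightCosetCoord x * (H.rightCosetCoord y)⁻¹ : H) : G) = x * y⁻¹ := by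
  simp only [rightCosetCoord, coe_mul, coe_inv, H.rightCosetRep_eq_of_mul_inv_mem h]
  group

theorem rightCosetCoord_mul (h : H) (x : G) :
    H.rightCosetCoord (h * x) = h * H.rightCosetCoord x := by
  rw [← mul_inv_eq_iff_eq_mul]
  apply Subtype.ext
  rw [H.coe_rightCosetCoord_mul_inv (by simp), mul_inv_cancel_right]

theorem exists_nhds_one_rightCosetCoord_mul_inv_mem [TopologicalSpace G]
    (hH : IsOpen (H : Set G)) {U : Set H} (hU : U ∈ 𝓝 1) :
    ∃ V ∈ 𝓝 (1 : G), ∀ x y : G, x * y⁻¹ ∈ V →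
      H.rightCosetCoord x * (H.rightCosetCoord y)⁻¹ ∈ U := by
  refine ⟨(↑) '' U, hH.isOpenEmbedding_subtypeVal.image_mem_nhds.mpr hU, ?_⟩
  rintro x y ⟨u, hu, hxy⟩
  rwa [Subtype.ext (H.coe_rightCosetCoord_mul_inv (hxy ▸ u.2) |>.trans hxy.symm)]

end Subgroup

section PointMass

variable {X : Type*} [DecidableEq X]

def pointMass (a : X) : X → ℝ := fun x => if x = a then 1 else 0

theorem toFunc_pointMass (a : X) (f : X → ℝ) : toFunc (pointMass a) f = f a := by
  rw [toFunc, dpair, finsum_eq_single _ a (fun x hx => by simp [pointMass, hx])]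
  simp [pointMass]

theorem isDelta_pointMass (a : X) : IsDelta (pointMass a) := by
  refine ⟨(Set.finite_singleton a).subset fun x hx => by_contra fun hxa => hx (if_neg hxa),
    fun x => ?_, ?_⟩
  · unfold pointMass
    split <;> norm_num
  · rw [finsum_eq_single _ a (fun x hx => by simp [pointMass, hx])]
    simp [pointMass]

theorem toFunc_pointMass_mem_meanUR [Group X] [TopologicalSpace X] (a : X) :
    toFunc (pointMass a) ∈ MeanUR X :=
  @subset_closure _ (uebTopR X) _ _ ⟨_, isDelta_pointMass a, rfl⟩

theorem actF_toFunc_pointMass [Group X] (g a : X) :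
    actF g (toFunc (pointMass a)) = toFunc (pointMass (g * a)) := by
  funext f
  simp only [actF, toFunc_pointMass]

theorem IsRUEB.exists_nhds_one_abs_toFunc_pointMass_sub_le [Group X] [TopologicalSpace X]
    {B : Set (X → ℝ)} (hB : IsRUEB B) {ε : ℝ} (hε : 0 < ε) :
    ∃ U ∈ 𝓝 (1 : X), ∀ a b : X, a * b⁻¹ ∈ U → ∀ f ∈ B,
      |toFunc (pointMass a) f - toFunc (pointMass b) f| ≤ ε := by
  obtain ⟨U, hU, hBU⟩ := hB.2 ε hε
  refine ⟨U, hU, fun a b hab f hf => ?_⟩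
  simpa [toFunc_pointMass, abs_sub_comm] using hBU _ hab f hf b

end PointMass

theorem open_subgroup_well_placed_general {G : Type*} [Group G] [TopologicalSpace G]
    (H : Subgroup G) (hH : IsOpen (H : Set G)) :
    WellPlaced H ∧
    ∃ (φ : G → ↥H) (ψ : G → ((↥H → ℝ) → ℝ)),
      ψ = (fun x => toFunc fun h : ↥H => if h = φ x then (1 : ℝ) else 0) ∧
      (∀ (h : ↥H) (x : G), φ ((h : G) * x) = h * φ x) ∧
      (∀ U ∈ nhds (1 : ↥H), ∃ V ∈ nhds (1 : G),
        ∀ x y : G, x * y⁻¹ ∈ V → φ x * (φ y)⁻¹ ∈ U) ∧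
      (∀ g : G, ψ g ∈ MeanUR ↥H) ∧
      (∀ (h : ↥H) (g : G), ψ ((h : G) * g) = actF h (ψ g)) ∧
      ∀ B : Set (↥H → ℝ), IsRUEB B → ∀ ε > (0 : ℝ), ∃ U ∈ nhds (1 : G),
        ∀ x y : G, x * y⁻¹ ∈ U → ∀ f ∈ B, |ψ x f - ψ y f| ≤ ε := by
  set ψ : G → (H → ℝ) → ℝ := fun x => toFunc (pointMass (H.rightCosetCoord x))
  have hmean (g : G) : ψ g ∈ MeanUR H := toFunc_pointMass_mem_meanUR _
  have hequiv (h : H) (g : G) : ψ (h * g) = actF h (ψ g) := by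
    simp only [ψ, actF_toFunc_pointMass, H.rightCosetCoord_mul]
  have hunif (B : Set (H → ℝ)) (hB : IsRUEB B) (ε : ℝ) (hε : 0 < ε) :
      ∃ U ∈ 𝓝 (1 : G), ∀ x y : G, x * y⁻¹ ∈ U → ∀ f ∈ B, |ψ x f - ψ y f| ≤ ε := by
    obtain ⟨U, hU, hBU⟩ := hB.exists_nhds_one_abs_toFunc_pointMass_sub_le hε
    obtain ⟨V, hV, hVU⟩ := H.exists_nhds_one_rightCosetCoord_mul_inv_mem hH hU
    exact ⟨V, hV, fun x y hxy => hBU _ _ (hVU x y hxy)⟩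
  exact ⟨⟨ψ, hmean, hequiv, hunif⟩, H.rightCosetCoord, ψ, rfl, H.rightCosetCoord_mul,
    fun U hU => H.exists_nhds_one_rightCosetCoord_mul_inv_mem hH hU, hmean, hequiv, hunif⟩

/-- Proposition 5.8: every open subgroup is well-placed, with a witness given by point
masses `x ↦ δ_{φ(x)}` for an `H`-left-equivariant, right-uniformly continuous
map `φ : G → H`. -/
theorem open_subgroup_well_placed {G : Type*} [Group G] [TopologicalSpace G]
    [IsTopologicalGroup G] (H : Subgroup G) (hH : IsOpen (H : Set G)) :
    WellPlaced H ∧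
    ∃ (φ : G → ↥H) (ψ : G → ((↥H → ℝ) → ℝ)),
      ψ = (fun x => toFunc fun h : ↥H => if h = φ x then (1 : ℝ) else 0) ∧
      (∀ (h : ↥H) (x : G), φ ((h : G) * x) = h * φ x) ∧
      (∀ U ∈ nhds (1 : ↥H), ∃ V ∈ nhds (1 : G),
        ∀ x y : G, x * y⁻¹ ∈ V → φ x * (φ y)⁻¹ ∈ U) ∧
      (∀ g : G, ψ g ∈ MeanUR ↥H) ∧
      (∀ (h : ↥H) (g : G), ψ ((h : G) * g) = actF h (ψ g)) ∧
      ∀ B : Set (↥H → ℝ), IsRUEB B → ∀ ε > (0 : ℝ), ∃ U ∈ nhds (1 : G),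
        ∀ x y : G, x * y⁻¹ ∈ U → ∀ f ∈ B, |ψ x f - ψ y f| ≤ ε :=
  open_subgroup_well_placed_general H hH
end

section
/- Let G be a locally compact Hausdorff group and Γ ≤ G a discrete cocompact subgroup (a cocompact lattice), i.e., Γ is discrete in G and there is a compact set K ⊆ G with ΓK = G. Then Γ is skew-well-placed in G: there exists a Γ-left-equivariant map φ : G → P(Γ) = {p ∈ ℓ¹(Γ) : p ≥ 0, ‖p‖₁ = 1} (i.e., φ(hx) = h·φ(x) for all h ∈ Γ, x ∈ G, where (h·p)(h') = p(h⁻¹h')) which is uniformly continuous from the left uniformity of G to the ‖·‖₁-uniformity on P(Γ); since Γ is discrete, the ‖·‖₁-uniformity on P(Γ) coincides with the UEB uniformity on Mean_u(Γ_ℓ) = P(Γ). -/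
open Filter Topology MeasureTheory UniformConvergence

/-!
Take an Urysohn function `f ≥ 0` with compact support and `f = 1` on `K`, and send `x` to the
vector `γ ↦ f (γ⁻¹ x)` normalised to total mass one. This vector is finitely supported since `Γ`
is discrete, its mass is at least one since `ΓK = G`, and `γ ↦ f (γ⁻¹ x)` is manifestly
`Γ`-equivariant. For `x⁻¹ y` small, all `γ` where `f (γ⁻¹ x)` or `f (γ⁻¹ y)` is nonzero lie in a
translate of `Γ ∩ C C⁻¹` for a fixed compact `C`, so their number is uniformly bounded, while
each difference is uniformly small by left uniform continuity of `f`. Normalising a vector of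
mass at least one at most doubles `ℓ¹`-distances.
-/

open Set Function
open scoped Pointwise

section Summation

variable {ι : Type*}

theorem tsum_le_ncard_mul_of_support_subset {g : ι → ℝ} {s : Set ι} (hs : s.Finite)
    (hg : support g ⊆ s) {δ : ℝ} (hδ : ∀ i ∈ s, g i ≤ δ) : ∑' i, g i ≤ s.ncard * δ := by
  rw [tsum_eq_sum' (s := hs.toFinset) (by simpa using hg), Set.ncard_eq_toFinset_card s hs,
    ← nsmul_eq_mul]
  exact Finset.sum_le_card_nsmul _ _ _ fun i hi => hδ i (hs.mem_toFinset.1 hi)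

theorem abs_tsum_le_tsum_abs {c : ι → ℝ} (hc : Summable fun i => |c i|) :
    |∑' i, c i| ≤ ∑' i, |c i| := by
  simpa only [Real.norm_eq_abs] using
    norm_tsum_le_tsum_norm (f := c) (by simpa only [Real.norm_eq_abs] using hc)

theorem tsum_abs_div_tsum_sub_div_tsum_le {a b : ι → ℝ} (ha : Summable a) (hb : Summable b)
    (hb0 : ∀ i, 0 ≤ b i) (hA : 0 < ∑' i, a i) (hB : 0 < ∑' i, b i) :
    ∑' i, |a i / ∑' j, a j - b i / ∑' j, b j| ≤ 2 * (∑' i, |a i - b i|) / ∑' i, a i := by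
  set A := ∑' i, a i
  set B := ∑' i, b i
  set D := ∑' i, |a i - b i|
  have hD : Summable fun i => |a i - b i| := (ha.sub hb).abs
  have hBA : |B - A| ≤ D := by
    rw [← hb.tsum_sub ha]
    simpa only [abs_sub_comm] using abs_tsum_le_tsum_abs (c := fun i => b i - a i)
      (by simpa only [abs_sub_comm] using hD)
  have hpt : ∀ i, |a i / A - b i / B| ≤ |a i - b i| / A + b i * (|B - A| / (A * B)) := by
    intro i
    have h : a i / A - b i / B = (a i - b i) / A + b i * ((B - A) / (A * B)) := by
      field_simp
      ring
    rw [h]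
    refine (abs_add_le _ _).trans_eq ?_
    rw [abs_div, abs_of_pos hA, abs_mul, abs_of_nonneg (hb0 i), abs_div,
      abs_of_pos (mul_pos hA hB)]
  calc ∑' i, |a i / A - b i / B|
      ≤ ∑' i, (|a i - b i| / A + b i * (|B - A| / (A * B))) :=
        Summable.tsum_le_tsum hpt ((ha.div_const A).sub (hb.div_const B)).abs
          ((hD.div_const A).add (hb.mul_right _))
    _ = (D + |B - A|) / A := by
        rw [(hD.div_const A).tsum_add (hb.mul_right _), tsum_div_const, hb.tsum_mul_right]
        change D / A + B * (|B - A| / (A * B)) = _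
        field_simp
    _ ≤ 2 * D / A := by gcongr; linarith

end Summation

section LeftUniformity

variable {G : Type*} [Group G] [TopologicalSpace G] [IsTopologicalGroup G]

attribute [local instance] IsTopologicalGroup.leftUniformSpace in
theorem HasCompactSupport.exists_nhds_one_dist_lt {β : Type*} [PseudoMetricSpace β] [Zero β]
    {f : G → β} (hfc : HasCompactSupport f) (hf : Continuous f) {ε : ℝ} (hε : 0 < ε) :
    ∃ U ∈ 𝓝 (1 : G), ∀ x y : G, x⁻¹ * y ∈ U → dist (f x) (f y) < ε := by
  have h := hfc.uniformContinuous_of_continuous hf (Metric.dist_mem_uniformity hε)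
  rw [uniformity_eq_comap_nhds_one_left] at h
  obtain ⟨U, hU, hUsub⟩ := mem_comap.1 h
  exact ⟨U, hU, fun x y hxy => hUsub (show (x, y) ∈ _ from hxy)⟩

end LeftUniformity

namespace Subgroup

variable {G : Type*} [Group G]

theorem finite_setOf_coe_mem [TopologicalSpace G] [IsTopologicalGroup G] [T2Space G]
    (Γ : Subgroup G) [DiscreteTopology Γ] {C : Set G} (hC : IsCompact C) :
    {γ : Γ | (γ : G) ∈ C}.Finite :=
  (isClosed_of_discrete.isClosedEmbedding_subtypeVal.isCompact_preimage hC).finite_of_discrete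

theorem finite_and_ncard_setOf_inv_mul_mem_le (Γ : Subgroup G) {C : Set G}
    (hC : {γ : Γ | (γ : G) ∈ C * C⁻¹}.Finite) (x : G) :
    {γ : Γ | (γ : G)⁻¹ * x ∈ C}.Finite ∧
      {γ : Γ | (γ : G)⁻¹ * x ∈ C}.ncard ≤ {γ : Γ | (γ : G) ∈ C * C⁻¹}.ncard := by
  rcases {γ : Γ | (γ : G)⁻¹ * x ∈ C}.eq_empty_or_nonempty with hA | ⟨γ₀, hγ₀⟩
  · simp [hA]
  -- `(γ₀⁻¹ x) (γ⁻¹ x)⁻¹ = γ₀⁻¹ γ`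
  have hmaps : MapsTo (γ₀⁻¹ * ·) {γ : Γ | (γ : G)⁻¹ * x ∈ C} {γ : Γ | (γ : G) ∈ C * C⁻¹} :=
    fun γ hγ => by
      simpa [mul_assoc] using mul_mem_mul (show (γ₀ : G)⁻¹ * x ∈ C from hγ₀)
        (inv_mem_inv.2 (show (γ : G)⁻¹ * x ∈ C from hγ))
  have hinj : InjOn (γ₀⁻¹ * ·) {γ : Γ | (γ : G)⁻¹ * x ∈ C} := (mul_right_injective _).injOn
  exact ⟨hC.of_injOn hmaps hinj, ncard_le_ncard_of_injOn _ hmaps hinj hC⟩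

variable (Γ : Subgroup G)

def orbitValues (f : G → ℝ) (x : G) : Γ → ℝ := fun γ => f ((γ : G)⁻¹ * x)

variable {Γ}

theorem orbitValues_mul_left (f : G → ℝ) (γ₀ : Γ) (x : G) :
    Γ.orbitValues f (γ₀ * x) = actD γ₀ (Γ.orbitValues f x) := by
  funext γ
  simp [orbitValues, actD, mul_assoc]

theorem tsum_orbitValues_mul_left (f : G → ℝ) (γ₀ : Γ) (x : G) :
    ∑' γ, Γ.orbitValues f (γ₀ * x) γ = ∑' γ, Γ.orbitValues f x γ := by
  rw [orbitValues_mul_left]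
  exact (Equiv.mulLeft γ₀⁻¹).tsum_eq _

theorem one_le_tsum_orbitValues {f : G → ℝ} {K : Set G} {x : G} (hf0 : ∀ g, 0 ≤ f g)
    (hfK : ∀ k ∈ K, 1 ≤ f k) (hcov : ∀ g : G, ∃ γ ∈ Γ, ∃ k ∈ K, g = γ * k)
    (hs : Summable (Γ.orbitValues f x)) : 1 ≤ ∑' γ, Γ.orbitValues f x γ := by
  obtain ⟨γ, hγ, k, hk, rfl⟩ := hcov x
  calc 1 ≤ Γ.orbitValues f (γ * k) ⟨γ, hγ⟩ := by simpa [orbitValues] using hfK k hk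
    _ ≤ _ := hs.le_tsum _ fun _ _ => hf0 _

variable [TopologicalSpace G]

theorem support_abs_orbitValues_sub_subset {f : G → ℝ} {V : Set G} (hV : 1 ∈ V) {x y : G}
    (hxy : x⁻¹ * y ∈ V) :
    support (fun γ => |Γ.orbitValues f x γ - Γ.orbitValues f y γ|) ⊆
      {γ : Γ | (γ : G)⁻¹ * x ∈ tsupport f * V⁻¹} := by
  have hmem : ∀ γ : Γ, ∀ v ∈ V, (γ : G)⁻¹ * x * v ∈ tsupport f →
      (γ : G)⁻¹ * x ∈ tsupport f * V⁻¹ :=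
    fun γ v hv h => by simpa using mul_mem_mul h (inv_mem_inv.2 hv)
  intro γ hγ
  by_contra hγC
  have hx0 : Γ.orbitValues f x γ = 0 := image_eq_zero_of_notMem_tsupport (f := f) fun h =>
    hγC (hmem γ 1 hV (by simpa using h))
  have hy0 : Γ.orbitValues f y γ = 0 := image_eq_zero_of_notMem_tsupport (f := f) fun h =>
    hγC (hmem γ _ hxy (by simpa [mul_assoc] using h))
  simp [hx0, hy0] at hγ

variable [IsTopologicalGroup G] [T2Space G] [DiscreteTopology Γ]

theorem summable_orbitValues {f : G → ℝ} (hfc : HasCompactSupport f) (x : G) :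
    Summable (Γ.orbitValues f x) := by
  refine summable_of_hasFiniteSupport ((Γ.finite_and_ncard_setOf_inv_mul_mem_le
    (Γ.finite_setOf_coe_mem (hfc.mul hfc.inv)) x).1.subset ?_)
  exact fun γ hγ => subset_tsupport f hγ

theorem exists_nhds_one_tsum_abs_orbitValues_sub_le [LocallyCompactSpace G] {f : G → ℝ}
    (hf : Continuous f) (hfc : HasCompactSupport f) {ε : ℝ} (hε : 0 < ε) :
    ∃ U ∈ 𝓝 (1 : G), ∀ x y : G, x⁻¹ * y ∈ U →
      ∑' γ, |Γ.orbitValues f x γ - Γ.orbitValues f y γ| ≤ ε := by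
  obtain ⟨V, hVc, hV⟩ := exists_compact_mem_nhds (1 : G)
  set C := tsupport f * V⁻¹
  have hC : IsCompact C := hfc.mul hVc.inv
  set N := {γ : Γ | (γ : G) ∈ C * C⁻¹}.ncard
  obtain ⟨U, hU, hfU⟩ := hfc.exists_nhds_one_dist_lt hf (ε := ε / (N + 1)) (by positivity)
  refine ⟨U ∩ V, inter_mem hU hV, fun x y ⟨hxyU, hxyV⟩ => ?_⟩
  obtain ⟨hfin, hcard⟩ :=
    Γ.finite_and_ncard_setOf_inv_mul_mem_le (Γ.finite_setOf_coe_mem (hC.mul hC.inv)) x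
  have hpt : ∀ γ : Γ, |Γ.orbitValues f x γ - Γ.orbitValues f y γ| ≤ ε / (N + 1) := fun γ =>
    (hfU _ _ (by simpa [mul_assoc] using hxyU)).le
  calc ∑' γ, |Γ.orbitValues f x γ - Γ.orbitValues f y γ|
      ≤ {γ : Γ | (γ : G)⁻¹ * x ∈ C}.ncard * (ε / (N + 1)) :=
        tsum_le_ncard_mul_of_support_subset hfin
          (support_abs_orbitValues_sub_subset (mem_of_mem_nhds hV) hxyV) fun γ _ => hpt γ
    _ ≤ N * (ε / (N + 1)) := by gcongr
    _ ≤ ε := by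
        rw [mul_div_assoc', div_le_iff₀ (by positivity)]
        linarith

end Subgroup

/-- Proposition 5.11: a cocompact lattice `Γ` in a locally compact group `G` is
skew-well-placed: there is a `Γ`-left-equivariant map `G → P(Γ) ⊆ ℓ¹(Γ)` which is
uniformly continuous from the left uniformity of `G` to the `‖·‖₁`-uniformity. -/
theorem cocompact_lattice_skew_well_placed {G : Type*} [Group G] [TopologicalSpace G]
    [IsTopologicalGroup G] [LocallyCompactSpace G] [T2Space G]
    (Γ : Subgroup G) [DiscreteTopology ↥Γ]
    (K : Set G) (hK : IsCompact K)
    (hcov : ∀ g : G, ∃ γ ∈ Γ, ∃ k ∈ K, g = γ * k) :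
    ∃ φ : G → (↥Γ → ℝ),
      (∀ x : G, (∀ γ : ↥Γ, 0 ≤ φ x γ) ∧ Summable (φ x) ∧ ∑' γ : ↥Γ, φ x γ = 1) ∧
      (∀ (γ : ↥Γ) (x : G), φ ((γ : G) * x) = actD γ (φ x)) ∧
      ∀ ε > (0 : ℝ), ∃ U ∈ nhds (1 : G), ∀ x y : G, x⁻¹ * y ∈ U →
        ∑' γ : ↥Γ, |φ x γ - φ y γ| ≤ ε := by
  obtain ⟨f, hfK, -, hfc, hf01⟩ :=
    exists_continuous_one_zero_of_isCompact hK isClosed_empty (disjoint_empty K)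
  have hf0 : ∀ g, 0 ≤ f g := fun g => (hf01 g).1
  have hF : ∀ x, Summable (Γ.orbitValues f x) := Γ.summable_orbitValues hfc
  have hS : ∀ x, 1 ≤ ∑' γ, Γ.orbitValues f x γ := fun x =>
    Γ.one_le_tsum_orbitValues hf0 (fun k hk => (hfK hk).ge) hcov (hF x)
  have hSpos : ∀ x, 0 < ∑' γ, Γ.orbitValues f x γ := fun x => zero_lt_one.trans_le (hS x)
  refine ⟨fun x γ => Γ.orbitValues f x γ / ∑' γ', Γ.orbitValues f x γ', fun x => ⟨?_, ?_, ?_⟩,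
    fun γ₀ x => ?_, fun ε hε => ?_⟩
  · exact fun γ => div_nonneg (hf0 _) (hSpos x).le
  · exact (hF x).div_const _
  · rw [tsum_div_const, div_self (hSpos x).ne']
  · funext γ
    dsimp only [actD]
    rw [Subgroup.tsum_orbitValues_mul_left, Subgroup.orbitValues_mul_left]
    rfl
  · obtain ⟨U, hU, hFU⟩ := Γ.exists_nhds_one_tsum_abs_orbitValues_sub_le f.continuous hfc
      (half_pos hε)
    refine ⟨U, hU, fun x y hxy => ?_⟩
    calc _ ≤ 2 * (∑' γ, |Γ.orbitValues f x γ - Γ.orbitValues f y γ|) /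
            ∑' γ, Γ.orbitValues f x γ :=
          tsum_abs_div_tsum_sub_div_tsum_le (hF x) (hF y) (fun _ => hf0 _) (hSpos x) (hSpos y)
      _ ≤ 2 * ∑' γ, |Γ.orbitValues f x γ - Γ.orbitValues f y γ| :=
          div_le_self (by positivity) (hS x)
      _ ≤ ε := by linarith [hFU x y hxy]
end
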